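/- arXiv:1504.02823 — 5 statements merged into one kernel-verified Lean document; each statement's English description precedes it below -/
import Mathlib

section
/- Let p be a prime, let λ be a partition, let B be an s-element β-set of λ, and let i, j ∈ {0,…,p−1} be such that B satisfies conditions (F1), (F2) and (F3) for (i,j). If there exists b ∈ B with b ≥ p and b − p ∉ B (equivalently, the p-core of λ is not λ itself), then i ≠ j. -/
/-- A partition, encoded as the weakly decreasing, eventually zero sequence of its parts. -/
def IsPartition (f : ℕ → ℕ) : Prop :=
  Antitone f ∧ ∃ N, ∀ i, N ≤ i → f i = 0

/-- `B` is the `s`-element β-set of the partition `f`: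
`B = {f k + (s - 1 - k) : 0 ≤ k < s}` (0-indexed parts), where `s` is at least the number
of parts of `f` (i.e. `f s = 0`). -/
def IsBetaSet (f : ℕ → ℕ) (s : ℕ) (B : Finset ℕ) : Prop :=
  f s = 0 ∧ B = (Finset.range s).image (fun k => f k + (s - 1 - k))

/-- Condition (F1) for runners `i`, `j`: every runner other than `i` and `j` has all its
beads pushed up (no gaps). -/
def F1 (p i j : ℕ) (B : Finset ℕ) : Prop :=
  ∀ k < p, k ≠ i → k ≠ j → ∀ b ∈ B, b % p = k → ∀ t < b, t % p = k → t ∈ B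

/-- Condition (F2) for runner `i`: if a position on runner `i` is unoccupied, every larger
position off runner `i` is unoccupied. -/
def F2 (p i : ℕ) (B : Finset ℕ) : Prop :=
  ∀ q : ℕ, q % p = i → q ∉ B → ∀ b ∈ B, q < b → b % p = i

/-- Condition (F3) for runner `j`: if a position on runner `j` is occupied, every smaller
position off runner `j` is occupied. -/
def F3 (p j : ℕ) (B : Finset ℕ) : Prop :=
  ∀ q ∈ B, q % p = j → ∀ d < q, d % p ≠ j → d ∈ B

/-! If `i = j`, a bead `b` with `b - p` empty cannot lie on a runner other than `i`, by (F1).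
On runner `i` itself, (F3) fills the position `b - p + 1`, which lies off runner `i` (as `p ≥ 2`)
and above the gap `b - p` on runner `i`, contradicting (F2). -/

theorem Nat.add_one_mod_ne_mod {n p : ℕ} (hp : 1 < p) : (n + 1) % p ≠ n % p := by
  intro h
  have hdvd : p ∣ n + 1 - n := (Nat.modEq_iff_dvd' n.le_succ).mp h.symm
  rw [Nat.add_sub_cancel_left, Nat.dvd_one] at hdvd
  omega

variable {p i j b : ℕ} {B : Finset ℕ}

theorem F1.sub_mem (h1 : F1 p i j B) (hp : 0 < p) (hb : b ∈ B) (hpb : p ≤ b)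
    (hbi : b % p ≠ i) (hbj : b % p ≠ j) : b - p ∈ B :=
  h1 (b % p) (Nat.mod_lt b hp) hbi hbj b hb rfl (b - p) (by omega) (Nat.mod_eq_sub_mod hpb).symm

theorem sub_mem_of_F2_of_F3 (h2 : F2 p i B) (h3 : F3 p i B) (hp : 1 < p) (hb : b ∈ B)
    (hpb : p ≤ b) (hbi : b % p = i) : b - p ∈ B := by
  by_contra hgap
  have hgap_mod : (b - p) % p = i := (Nat.mod_eq_sub_mod hpb).symm.trans hbi
  have hnext_mod : (b - p + 1) % p ≠ i := hgap_mod ▸ Nat.add_one_mod_ne_mod hp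
  have hnext : b - p + 1 ∈ B := h3 b hb hbi (b - p + 1) (by omega) hnext_mod
  exact hnext_mod (h2 (b - p) hgap_mod hgap (b - p + 1) hnext (Nat.lt_succ_self _))

theorem runners_ne_of_not_core_general (p : ℕ) (hp : p.Prime)
    (B : Finset ℕ)
    (i j : ℕ)
    (h1 : F1 p i j B) (h2 : F2 p i B) (h3 : F3 p j B)
    (hcore : ∃ b ∈ B, p ≤ b ∧ b - p ∉ B) :
    i ≠ j := by
  rintro rfl
  obtain ⟨b, hb, hpb, hgap⟩ := hcore
  by_cases hbi : b % p = i
  · exact hgap (sub_mem_of_F2_of_F3 h2 h3 hp.one_lt hb hpb hbi)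
  · exact hgap (h1.sub_mem hp.pos hb hpb hbi hbi)

/-- If a β-set of `λ` satisfies (F1), (F2), (F3) for `(i, j)` and the
`p`-core of `λ` is not `λ` itself (some bead can be pushed up), then `i ≠ j`. -/
theorem runners_ne_of_not_core (p : ℕ) (hp : p.Prime) (f : ℕ → ℕ) (hf : IsPartition f)
    (s : ℕ) (B : Finset ℕ) (hB : IsBetaSet f s B)
    (i j : ℕ) (hi : i < p) (hj : j < p)
    (h1 : F1 p i j B) (h2 : F2 p i B) (h3 : F3 p j B)
    (hcore : ∃ b ∈ B, p ≤ b ∧ b - p ∉ B) :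
    i ≠ j :=
  runners_ne_of_not_core_general p hp B i j h1 h2 h3 hcore
end

section
/- Let p be a prime, let λ be a partition, and let B be an s-element β-set of λ satisfying conditions (F1), (F2) and (F3) for some i, j ∈ {0,…,p−1}. Let λ(0) and λ'(0) denote the 0-th terms of the p-adic expansions of λ and of the conjugate λ', let λ^{(i)} and λ^{(j)} be the runner-i and runner-j quotient partitions of B, and let κ_p(λ) be the partition represented by the pushed-up set B↑. Then: (a) λ − λ(0) = p·λ^{(i)}; (b) λ' − λ'(0) = p·(λ^{(j)})'; and (c) (λ'(0))' = κ_p(λ) + (λ − λ(0)). Consequently Φ(λ) := ((λ'(0))' | λ' − λ'(0)) equals (κ_p(λ) + p·λ^{(i)} | p·(λ^{(j)})'). -/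
/-- A partition is `p`-restricted if successive parts differ by at most `p - 1`. -/
def IsPRestricted (p : ℕ) (f : ℕ → ℕ) : Prop :=
  IsPartition f ∧ ∀ i, f i - f (i + 1) ≤ p - 1

/-- `c` is a `p`-adic expansion of the partition `f`. -/
def IsPAdicExpansion (p : ℕ) (f : ℕ → ℕ) (c : ℕ → ℕ → ℕ) : Prop :=
  (∀ i, IsPRestricted p (c i)) ∧
  ∃ N, (∀ i j, N ≤ i → c i j = 0) ∧ ∀ j, f j = ∑ i ∈ Finset.range N, p ^ i * c i j

/-- The conjugate partition: `(conjugate f) j = #{i : f i ≥ j + 1}`. -/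
noncomputable def conjugate (f : ℕ → ℕ) : ℕ → ℕ :=
  fun j => Nat.card {i : ℕ | j < f i}

/-- The `t`-th largest element of a finite set of naturals (`0` if `t ≥ card`). -/
def nthLargest (C : Finset ℕ) (t : ℕ) : ℕ :=
  ((C.sort (· ≤ ·)).reverse).getD t 0

/-- The partition represented by a finite set `C ⊆ ℕ`: its `t`-th part is the number of
vacant positions below the `t`-th largest element of `C`. -/
def partOfSet (C : Finset ℕ) : ℕ → ℕ :=
  fun t => ((Finset.range (nthLargest C t)).filter (fun u => u ∉ C)).card

/-- The beads of `B` lying on runner `k` (positions congruent to `k` mod `p`). -/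
def runnerSet (p k : ℕ) (B : Finset ℕ) : Finset ℕ :=
  B.filter (fun b => b % p = k)

/-- The runner-`k` quotient partition of the abacus `B`: its `t`-th part is the number of
vacant positions on runner `k` above the `t`-th lowest... i.e. below the `t`-th largest
occupied position of runner `k`. -/
def quotientPart (p k : ℕ) (B : Finset ℕ) : ℕ → ℕ :=
  fun t => ((Finset.range (nthLargest (runnerSet p k B) t)).filter
      (fun u => u % p = k ∧ u ∉ B)).card

/-- The pushed-up abacus: each runner keeps its number of beads, pushed to the top. -/
def pushUp (p : ℕ) (B : Finset ℕ) : Finset ℕ :=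
  (Finset.range p).biUnion
    (fun k => (Finset.range (runnerSet p k B).card).image (fun t => k + t * p))

open Finset

def countAbove (S : Finset ℕ) (b : ℕ) : ℕ := #(S.filter (b < ·))

section Ranks

variable {S : Finset ℕ} {a b x t t' : ℕ}

lemma countAbove_lt_card (hb : b ∈ S) : countAbove S b < #S :=
  card_lt_card (filter_ssubset.mpr ⟨b, hb, lt_irrefl b⟩)

lemma countAbove_antitone : Antitone (countAbove S) := fun _ _ hab =>
  card_le_card fun x => by simp only [mem_filter]; exact fun h => ⟨h.1, by omega⟩

lemma countAbove_lt_countAbove (hab : a < b) (hb : b ∈ S) : countAbove S b < countAbove S a :=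
  card_lt_card <| (ssubset_iff_of_subset fun x => by
    simp only [mem_filter]; exact fun h => ⟨h.1, by omega⟩).mpr ⟨b, by simp [hb, hab], by simp⟩

lemma countAbove_injOn : Set.InjOn (countAbove S) S :=
  StrictAntiOn.injOn fun _ _ _ hb hab => countAbove_lt_countAbove hab hb

lemma card_eq_countAbove_add (hb : b ∈ S) :
    #S = countAbove S b + #(S.filter (· < b)) + 1 := by
  have hle : S.filter (fun x => ¬ b < x) = insert b (S.filter (· < b)) := by
    ext x
    simp only [mem_filter, mem_insert, not_lt]
    constructor
    · rintro ⟨hx, hxb⟩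
      rcases hxb.lt_or_eq with h | rfl
      exacts [Or.inr ⟨hx, h⟩, Or.inl rfl]
    · rintro (rfl | ⟨hx, h⟩)
      exacts [⟨hb, le_rfl⟩, ⟨hx, h.le⟩]
  have := card_filter_add_card_filter_not (s := S) (p := (b < ·))
  rw [hle, card_insert_of_notMem (by simp)] at this
  unfold countAbove
  omega

lemma nthLargest_eq_orderEmbOfFin (ht : t < #S) :
    nthLargest S t = S.orderEmbOfFin rfl ⟨#S - 1 - t, by omega⟩ := by
  have hlen : (S.sort (· ≤ ·)).length = #S := length_sort _
  rw [nthLargest, List.getD_eq_getElem _ _ (by simpa [hlen] using ht), List.getElem_reverse,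
    orderEmbOfFin_apply]
  simp [hlen]

lemma countAbove_orderEmbOfFin (k : Fin #S) :
    countAbove S (S.orderEmbOfFin rfl k) = #S - 1 - k := by
  set e := S.orderEmbOfFin rfl
  have : S.filter (e k < ·) = (Ioi k).map e.toEmbedding := by
    ext x
    simp only [mem_filter, mem_map, mem_Ioi, RelEmbedding.coe_toEmbedding]
    constructor
    · rintro ⟨hx, hlt⟩
      obtain ⟨m, rfl⟩ : x ∈ Set.range e := by rwa [range_orderEmbOfFin]
      exact ⟨m, e.lt_iff_lt.mp hlt, rfl⟩
    · rintro ⟨m, hm, rfl⟩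
      exact ⟨orderEmbOfFin_mem S rfl m, e.lt_iff_lt.mpr hm⟩
  rw [countAbove, this, card_map, Fin.card_Ioi]

lemma nthLargest_mem (ht : t < #S) : nthLargest S t ∈ S := by
  rw [nthLargest_eq_orderEmbOfFin ht]
  exact orderEmbOfFin_mem S rfl _

lemma countAbove_nthLargest (ht : t < #S) : countAbove S (nthLargest S t) = t := by
  rw [nthLargest_eq_orderEmbOfFin ht, countAbove_orderEmbOfFin]
  simp only
  omega

lemma nthLargest_countAbove (hb : b ∈ S) : nthLargest S (countAbove S b) = b :=
  countAbove_injOn (nthLargest_mem (countAbove_lt_card hb)) hb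
    (countAbove_nthLargest (countAbove_lt_card hb))

lemma nthLargest_of_card_le (ht : #S ≤ t) : nthLargest S t = 0 :=
  List.getD_eq_default _ _ (by simpa using ht)

lemma nthLargest_lt_nthLargest (htt' : t < t') (ht' : t' < #S) :
    nthLargest S t' < nthLargest S t := by
  by_contra! h
  have := countAbove_antitone (S := S) h
  rw [countAbove_nthLargest ht', countAbove_nthLargest (htt'.trans ht')] at this
  omega

lemma le_nthLargest_succ (ht : t + 1 < #S) (hx : x ∈ S) (hxt : x < nthLargest S t) :
    x ≤ nthLargest S (t + 1) := by
  by_contra! h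
  have h1 := countAbove_lt_countAbove h hx
  have h2 := countAbove_lt_countAbove hxt (nthLargest_mem (by omega : t < #S))
  rw [countAbove_nthLargest ht] at h1
  rw [countAbove_nthLargest (by omega)] at h2
  omega

end Ranks

def gapsBelow (S : Finset ℕ) (b : ℕ) : ℕ := #((range b).filter (· ∉ S))

section PartOfSet

variable {S : Finset ℕ} {b c d t : ℕ}

lemma partOfSet_eq_gapsBelow (S : Finset ℕ) (t : ℕ) :
    partOfSet S t = gapsBelow S (nthLargest S t) := rfl

lemma gapsBelow_add_card_filter_lt (S : Finset ℕ) (b : ℕ) :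
    gapsBelow S b + #(S.filter (· < b)) = b := by
  have h := card_filter_add_card_filter_not (s := range b) (p := (· ∉ S))
  have hin : (range b).filter (fun u => ¬ u ∉ S) = S.filter (· < b) := by
    ext x
    simp [and_comm]
  rwa [hin, card_range] at h

lemma gapsBelow_mono (S : Finset ℕ) : Monotone (gapsBelow S) := fun _ _ h =>
  card_le_card fun x => by simp only [mem_filter, mem_range]; exact fun hx => ⟨by omega, hx.2⟩

lemma gapsBelow_succ_of_notMem (hb : b ∉ S) :
    gapsBelow S (b + 1) = gapsBelow S b + 1 := by
  rw [gapsBelow, range_add_one, filter_insert, if_pos hb, card_insert_of_notMem (by simp),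
    gapsBelow]

lemma partOfSet_of_card_le (ht : #S ≤ t) : partOfSet S t = 0 := by
  simp [partOfSet, nthLargest_of_card_le ht]

lemma partOfSet_add_eq_nthLargest (ht : t < #S) :
    partOfSet S t + (#S - 1 - t) = nthLargest S t := by
  have h1 := gapsBelow_add_card_filter_lt S (nthLargest S t)
  have h2 := card_eq_countAbove_add (nthLargest_mem ht)
  rw [countAbove_nthLargest ht] at h2
  rw [partOfSet_eq_gapsBelow]
  omega

lemma partOfSet_antitone (S : Finset ℕ) : Antitone (partOfSet S) := by
  refine antitone_nat_of_succ_le fun t => ?_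
  rcases lt_or_ge (t + 1) #S with h | h
  · exact gapsBelow_mono S (nthLargest_lt_nthLargest (Nat.lt_add_one t) h).le
  · simp [partOfSet_of_card_le h]

lemma isPartition_partOfSet (S : Finset ℕ) : IsPartition (partOfSet S) :=
  ⟨partOfSet_antitone S, #S, fun _ => partOfSet_of_card_le⟩

/-- Consecutive elements of `S` are then at most `p` apart, and the smallest one is below `p`. -/
lemma isPRestricted_partOfSet_of_forall_exists_mem {p : ℕ}
    (hS : ∀ b ∈ S, p ≤ b → ∃ x ∈ S, b - p ≤ x ∧ x < b) : IsPRestricted p (partOfSet S) := by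
  refine ⟨isPartition_partOfSet S, fun t => ?_⟩
  rcases lt_or_ge (t + 1) #S with ht | ht
  · have hb := partOfSet_add_eq_nthLargest (S := S) (t := t) (by omega)
    have hb' := partOfSet_add_eq_nthLargest ht
    have hlt := nthLargest_lt_nthLargest (Nat.lt_add_one t) ht
    have hgap : nthLargest S t ≤ nthLargest S (t + 1) + p := by
      by_contra! h
      obtain ⟨x, hx, hpx, hxb⟩ := hS _ (nthLargest_mem (t := t) (by omega)) (by omega)
      have := le_nthLargest_succ ht hx hxb
      omega
    omega
  · rw [partOfSet_of_card_le (S := S) (t := t + 1) ht]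
    rcases lt_or_ge t #S with ht' | ht'
    · have hb := partOfSet_add_eq_nthLargest ht'
      have hmin : nthLargest S t < p := by
        by_contra! h
        obtain ⟨x, hx, -, hxb⟩ := hS _ (nthLargest_mem ht') h
        have := countAbove_lt_countAbove hxb (nthLargest_mem ht')
        rw [countAbove_nthLargest ht'] at this
        have := countAbove_lt_card hx
        omega
      omega
    · simp [partOfSet_of_card_le ht']

end PartOfSet

section Swap

variable {S : Finset ℕ} {c d x t : ℕ}

lemma card_swap (hc : c ∈ S) (hd : d ∉ S) : #(insert d (S.erase c)) = #S := by
  rw [card_insert_of_notMem (fun h => hd (mem_of_mem_erase h)), card_erase_add_one hc]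

lemma countAbove_swap (hc : c ∈ S) (hd : d ∉ S) (hx : x < min c d ∨ max c d ≤ x) :
    countAbove (insert d (S.erase c)) x = countAbove S x := by
  unfold countAbove
  rw [filter_insert, filter_erase]
  rcases hx with hx | hx
  · rw [if_pos (by omega), card_insert_of_notMem (by simp [hd]),
      card_erase_add_one (by simp [hc]; omega)]
  · rw [if_neg (by omega), erase_eq_of_notMem (by simp; omega)]

lemma countAbove_swap_self (hdc : d < c) (hd : d ∉ S)
    (hbetween : ∀ x ∈ S, x ≤ d ∨ c ≤ x) :
    countAbove (insert d (S.erase c)) d = countAbove S c := by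
  unfold countAbove
  congr 1
  ext x
  simp only [mem_filter, mem_insert, mem_erase]
  constructor
  · rintro ⟨rfl | ⟨hxc, hxS⟩, hdx⟩
    · omega
    · exact ⟨hxS, by rcases hbetween x hxS with h | h <;> omega⟩
  · rintro ⟨hxS, hcx⟩
    exact ⟨Or.inr ⟨by omega, hxS⟩, by omega⟩

lemma partOfSet_swap (hdc : d < c) (hc : c ∈ S) (hd : d ∉ S)
    (hbetween : ∀ x ∈ S, x ≤ d ∨ c ≤ x) (t : ℕ) :
    partOfSet S t = partOfSet (insert d (S.erase c)) t +
      if t = countAbove S c then c - d else 0 := by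
  set S' := insert d (S.erase c)
  have hcard : #S' = #S := card_swap hc hd
  rcases lt_or_ge t #S with ht | ht
  · have h := partOfSet_add_eq_nthLargest ht
    have h' := partOfSet_add_eq_nthLargest (S := S') (t := t) (by omega)
    split_ifs with hτ
    · have hS : nthLargest S t = c := hτ ▸ nthLargest_countAbove hc
      have hS' : nthLargest S' t = d := by
        rw [hτ, ← countAbove_swap_self hdc hd hbetween]
        exact nthLargest_countAbove (mem_insert_self d _)
      omega
    · have hb := nthLargest_mem ht
      have hbc : nthLargest S t ≠ c := fun h => hτ (by rw [← h, countAbove_nthLargest ht])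
      have hb' : nthLargest S t ∈ S' := mem_insert_of_mem (mem_erase.mpr ⟨hbc, hb⟩)
      have hout : nthLargest S t < min c d ∨ max c d ≤ nthLargest S t := by
        have := ne_of_mem_of_not_mem hb hd
        rcases hbetween _ hb with h | h <;> omega
      have hS' : nthLargest S' t = nthLargest S t := by
        conv_lhs => rw [← countAbove_nthLargest ht, ← countAbove_swap hc hd hout]
        exact nthLargest_countAbove hb'
      omega
  · rw [if_neg (by have := countAbove_lt_card hc; omega), partOfSet_of_card_le ht,
      partOfSet_of_card_le (by omega)]

end Swap

lemma countAbove_image_of_strictMono {g : ℕ → ℕ} (hg : StrictMono g) (S : Finset ℕ) (b : ℕ) :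
    countAbove (S.image g) (g b) = countAbove S b := by
  rw [countAbove, filter_image, card_image_of_injective _ hg.injective]
  simp only [hg.lt_iff_lt]
  rfl

lemma nthLargest_image_of_strictMono {g : ℕ → ℕ} (hg : StrictMono g) {S : Finset ℕ} {t : ℕ}
    (ht : t < #S) : nthLargest (S.image g) t = g (nthLargest S t) := by
  conv_lhs => rw [← countAbove_nthLargest ht, ← countAbove_image_of_strictMono hg]
  exact nthLargest_countAbove (mem_image_of_mem g (nthLargest_mem ht))

lemma nthLargest_image_range_of_strictAntiOn {e : ℕ → ℕ} {s t : ℕ}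
    (he : StrictAntiOn e (Set.Iio s)) (ht : t < s) : nthLargest ((range s).image e) t = e t := by
  have hcount : countAbove ((range s).image e) (e t) = t := by
    have : (range s).filter (fun k => e t < e k) = range t := by
      ext k
      simp only [mem_filter, mem_range]
      constructor
      · exact fun ⟨hk, hlt⟩ => (he.lt_iff_gt ht hk).mp hlt
      · exact fun hk => ⟨hk.trans ht, (he.lt_iff_gt ht (hk.trans ht)).mpr hk⟩
    rw [countAbove, filter_image, this, card_image_of_injOn
      (he.injOn.mono fun k hk => (mem_range.mp hk).trans ht), card_range]
  conv_lhs => rw [← hcount]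
  exact nthLargest_countAbove (mem_image_of_mem e (mem_range.mpr ht))

lemma IsBetaSet.partOfSet_eq {f : ℕ → ℕ} (hf : IsPartition f) {s : ℕ} {B : Finset ℕ}
    (hB : IsBetaSet f s B) : partOfSet B = f := by
  obtain ⟨hfs, rfl⟩ := hB
  have he : StrictAntiOn (fun k => f k + (s - 1 - k)) (Set.Iio s) := fun a _ b hb hab => by
    have := hf.1 hab.le
    simp only [Set.mem_Iio] at hb ⊢
    omega
  have hcard : #((range s).image fun k => f k + (s - 1 - k)) = s := by
    rw [card_image_of_injOn (by rw [coe_range]; exact he.injOn), card_range]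
  funext t
  rcases lt_or_ge t s with ht | ht
  · have h := partOfSet_add_eq_nthLargest (S := (range s).image _) (t := t) (by rwa [hcard])
    rw [nthLargest_image_range_of_strictAntiOn he ht, hcard] at h
    exact Nat.add_right_cancel h
  · rw [partOfSet_of_card_le (by rwa [hcard])]
    have := hf.1 ht
    omega

def runnerRows (p k : ℕ) (S : Finset ℕ) : Finset ℕ := (runnerSet p k S).image (· / p)

section Runners

variable {p k : ℕ} {S : Finset ℕ}

lemma add_mul_mod_of_lt (hk : k < p) (v : ℕ) : (k + v * p) % p = k := by
  rw [Nat.add_mul_mod_self_right, Nat.mod_eq_of_lt hk]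

lemma add_mul_div_of_lt (hk : k < p) (v : ℕ) : (k + v * p) / p = v := by
  rw [Nat.add_mul_div_right _ _ (by omega), Nat.div_eq_of_lt hk, zero_add]

lemma add_div_mul_of_mod_eq {u : ℕ} (hu : u % p = k) : k + u / p * p = u := by
  rw [← hu, Nat.mod_add_div']

@[simp]
lemma mem_runnerSet {x : ℕ} : x ∈ runnerSet p k S ↔ x ∈ S ∧ x % p = k := mem_filter

lemma mem_runnerRows (hk : k < p) {v : ℕ} : v ∈ runnerRows p k S ↔ k + v * p ∈ S := by
  simp only [runnerRows, mem_image, mem_runnerSet]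
  constructor
  · rintro ⟨u, ⟨hu, hum⟩, rfl⟩
    rwa [add_div_mul_of_mod_eq hum]
  · exact fun h => ⟨_, ⟨h, add_mul_mod_of_lt hk v⟩, add_mul_div_of_lt hk v⟩

lemma runnerSet_eq_image_runnerRows (hk : k < p) :
    runnerSet p k S = (runnerRows p k S).image (k + · * p) := by
  ext u
  simp only [mem_image, mem_runnerRows hk, mem_runnerSet]
  constructor
  · rintro ⟨hu, hum⟩
    exact ⟨u / p, by rwa [add_div_mul_of_mod_eq hum], add_div_mul_of_mod_eq hum⟩
  · rintro ⟨v, hv, rfl⟩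
    exact ⟨hv, add_mul_mod_of_lt hk v⟩

lemma strictMono_add_mul (hp : 0 < p) (k : ℕ) : StrictMono (k + · * p) :=
  fun _ _ h => by simpa using Nat.mul_lt_mul_of_pos_right h hp

lemma card_runnerRows (hk : k < p) : #(runnerRows p k S) = #(runnerSet p k S) := by
  rw [runnerSet_eq_image_runnerRows hk,
    card_image_of_injective _ (strictMono_add_mul (by omega) k).injective]

lemma quotientPart_eq_partOfSet_runnerRows (hk : k < p) :
    quotientPart p k S = partOfSet (runnerRows p k S) := by
  funext t
  rcases lt_or_ge t #(runnerRows p k S) with ht | ht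
  · set r := nthLargest (runnerRows p k S) t
    have hgaps : (range (k + r * p)).filter (fun u => u % p = k ∧ u ∉ S) =
        ((range r).filter (· ∉ runnerRows p k S)).image (k + · * p) := by
      ext u
      simp only [mem_filter, mem_range, mem_image, mem_runnerRows hk]
      constructor
      · rintro ⟨hu, hum, huS⟩
        refine ⟨u / p, ⟨?_, by rwa [add_div_mul_of_mod_eq hum]⟩, add_div_mul_of_mod_eq hum⟩
        rw [← add_div_mul_of_mod_eq hum] at hu
        exact (strictMono_add_mul (by omega) k).lt_iff_lt.mp hu
      · rintro ⟨v, ⟨hv, hvS⟩, rfl⟩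
        exact ⟨(strictMono_add_mul (by omega) k) hv, add_mul_mod_of_lt hk v, hvS⟩
    rw [quotientPart, runnerSet_eq_image_runnerRows hk,
      nthLargest_image_of_strictMono (strictMono_add_mul (by omega) k) ht, hgaps,
      card_image_of_injective _ (strictMono_add_mul (by omega) k).injective]
    rfl
  · rw [partOfSet_of_card_le ht, quotientPart, nthLargest_of_card_le (by
      rwa [card_runnerRows hk] at ht)]
    simp

end Runners

lemma eq_range_card_of_forall_le_mem {E : Finset ℕ} (hE : ∀ v ∈ E, ∀ w ≤ v, w ∈ E) :
    E = range #E := by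
  ext v
  rw [mem_range]
  constructor
  · intro hv
    have := card_le_card fun w (hw : w ∈ range (v + 1)) =>
      hE v hv w (by simpa [Nat.lt_succ_iff] using hw)
    simpa using this
  · intro hv
    by_contra hvE
    have := card_le_card fun w (hw : w ∈ E) =>
      mem_range.mpr (lt_of_not_ge fun hvw => hvE (hE w hw v hvw))
    simp at this
    omega

lemma partOfSet_range (m t : ℕ) : partOfSet (range m) t = 0 := by
  rcases lt_or_ge t m with ht | ht
  · rw [partOfSet_eq_gapsBelow, gapsBelow, card_eq_zero, filter_eq_empty_iff]
    have := nthLargest_mem (S := range m) (t := t) (by simpa using ht)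
    simp only [mem_range] at this ⊢
    omega
  · exact partOfSet_of_card_le (by simpa using ht)

def IsPushedUpRunner (p i : ℕ) (S : Finset ℕ) : Prop :=
  ∀ x ∈ S, x % p = i → ∀ u < x, u % p = i → u ∈ S

def pushUpRunner (p i : ℕ) (S : Finset ℕ) : Finset ℕ :=
  S.filter (· % p ≠ i) ∪ (range #(runnerSet p i S)).image (i + · * p)

section PushUpRunner

variable {p i k : ℕ} {S : Finset ℕ} {x : ℕ}

lemma IsPushedUpRunner.runnerRows_eq_range (hk : k < p) (h : IsPushedUpRunner p k S) :
    runnerRows p k S = range #(runnerSet p k S) := by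
  rw [← card_runnerRows hk]
  refine eq_range_card_of_forall_le_mem fun v hv w hwv => ?_
  rw [mem_runnerRows hk] at hv ⊢
  rcases hwv.lt_or_eq with hwv | rfl
  · exact h _ hv (add_mul_mod_of_lt hk v) _ (strictMono_add_mul (by omega) k hwv)
      (add_mul_mod_of_lt hk w)
  · exact hv

lemma IsPushedUpRunner.mem_iff (hk : k < p) (h : IsPushedUpRunner p k S) (hx : x % p = k) :
    x ∈ S ↔ x / p < #(runnerSet p k S) := by
  rw [← mem_range, ← h.runnerRows_eq_range hk, mem_runnerRows hk, add_div_mul_of_mod_eq hx]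

lemma IsPushedUpRunner.quotientPart_eq_zero (hk : k < p) (h : IsPushedUpRunner p k S) (t : ℕ) :
    quotientPart p k S t = 0 := by
  rw [quotientPart_eq_partOfSet_runnerRows hk, h.runnerRows_eq_range hk, partOfSet_range]

lemma mem_pushUpRunner (hi : i < p) :
    x ∈ pushUpRunner p i S ↔
      (x % p ≠ i ∧ x ∈ S) ∨ (x % p = i ∧ x / p < #(runnerSet p i S)) := by
  simp only [pushUpRunner, mem_union, mem_filter, mem_image, mem_range]
  constructor
  · rintro (⟨hxS, hx⟩ | ⟨v, hv, rfl⟩)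
    · exact Or.inl ⟨hx, hxS⟩
    · exact Or.inr ⟨add_mul_mod_of_lt hi v, by rwa [add_mul_div_of_lt hi]⟩
  · rintro (⟨hx, hxS⟩ | ⟨hx, hxv⟩)
    · exact Or.inl ⟨hxS, hx⟩
    · exact Or.inr ⟨x / p, hxv, add_div_mul_of_mod_eq hx⟩

lemma runnerSet_pushUpRunner_of_ne (hi : i < p) (hki : k ≠ i) :
    runnerSet p k (pushUpRunner p i S) = runnerSet p k S := by
  ext x
  simp only [mem_runnerSet, mem_pushUpRunner hi]
  constructor
  · rintro ⟨⟨-, hxS⟩ | ⟨hx, -⟩, hxk⟩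
    exacts [⟨hxS, hxk⟩, absurd (hxk ▸ hx) hki]
  · rintro ⟨hxS, hxk⟩
    exact ⟨Or.inl ⟨hxk ▸ hki, hxS⟩, hxk⟩

lemma card_runnerSet_pushUpRunner_self (hi : i < p) :
    #(runnerSet p i (pushUpRunner p i S)) = #(runnerSet p i S) := by
  have : runnerSet p i (pushUpRunner p i S) = (range #(runnerSet p i S)).image (i + · * p) := by
    ext x
    simp only [mem_runnerSet, mem_pushUpRunner hi, mem_image, mem_range]
    constructor
    · rintro ⟨⟨hx, -⟩ | ⟨-, hxv⟩, hxi⟩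
      exacts [absurd hxi hx, ⟨x / p, hxv, add_div_mul_of_mod_eq hxi⟩]
    · rintro ⟨v, hv, rfl⟩
      exact ⟨Or.inr ⟨add_mul_mod_of_lt hi v, by rwa [add_mul_div_of_lt hi]⟩,
        add_mul_mod_of_lt hi v⟩
  rw [this, card_image_of_injective _ (strictMono_add_mul (by omega) i).injective, card_range]

lemma isPushedUpRunner_pushUpRunner (hi : i < p) : IsPushedUpRunner p i (pushUpRunner p i S) := by
  intro x hx hxi u hux hui
  rw [mem_pushUpRunner hi] at hx ⊢
  refine Or.inr ⟨hui, lt_of_le_of_lt (Nat.div_le_div_right hux.le) ?_⟩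
  rcases hx with ⟨hx, -⟩ | ⟨-, hxv⟩
  exacts [absurd hxi hx, hxv]

lemma IsPushedUpRunner.pushUpRunner_eq (hi : i < p) (h : IsPushedUpRunner p i S) :
    pushUpRunner p i S = S := by
  ext x
  rw [mem_pushUpRunner hi]
  by_cases hx : x % p = i
  · simp [hx, h.mem_iff hi hx]
  · simp [hx]

end PushUpRunner

section F2

variable {p i j : ℕ} {S : Finset ℕ}

lemma F2.mem_of_lt (h : F2 p i S) {b u : ℕ} (hb : b ∈ S) (hbi : b % p ≠ i) (hui : u % p = i)
    (hub : u < b) : u ∈ S :=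
  by_contra fun hu => hbi (h u hui hu b hb hub)

lemma F2.pushUpRunner_self (hi : i < p) (h : F2 p i S) : F2 p i (pushUpRunner p i S) := by
  intro q hqi hq b hb hqb
  rw [mem_pushUpRunner hi] at hq hb
  rcases hb with ⟨hbi, hb⟩ | ⟨hbi, -⟩
  · have hrows : range (q / p + 1) ⊆ runnerRows p i S := fun v hv => by
      have : v * p ≤ q / p * p := Nat.mul_le_mul_right p (by simpa [Nat.lt_succ_iff] using hv)
      have := Nat.mod_add_div' q p
      rw [mem_runnerRows hi]
      exact h.mem_of_lt hb hbi (add_mul_mod_of_lt hi v) (by omega)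
    have := card_le_card hrows
    rw [card_range, card_runnerRows hi] at this
    exact absurd (Or.inr ⟨hqi, by omega⟩) hq
  · exact hbi

lemma F2.pushUpRunner_of_ne (hj : j < p) (hij : i ≠ j) (h : F2 p i S) :
    F2 p i (pushUpRunner p j S) := by
  intro q hqi hq b hb hqb
  have hqS : q ∉ S := fun hqS => hq ((mem_pushUpRunner hj).mpr (Or.inl ⟨hqi ▸ hij, hqS⟩))
  rw [mem_pushUpRunner hj] at hb
  rcases hb with ⟨-, hb⟩ | ⟨hbj, hbv⟩
  · exact h q hqi hqS b hb hqb
  · obtain ⟨v, hv, hbv⟩ : ∃ v ∈ runnerRows p j S, b / p ≤ v := by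
      by_contra! hall
      have := card_le_card fun v hv => mem_range.mpr (hall v hv)
      rw [card_range, card_runnerRows hj] at this
      omega
    have hb' := (mem_runnerRows hj).mp hv
    have : b / p * p ≤ v * p := Nat.mul_le_mul_right p hbv
    have := Nat.mod_add_div' b p
    have := h q hqi hqS _ hb' (by omega)
    rw [add_mul_mod_of_lt hj] at this
    exact absurd this.symm hij

end F2

lemma isPushedUpRunner_of_succ {p i : ℕ} {S : Finset ℕ} (hi : i < p)
    (h : ∀ r, i + (r + 1) * p ∈ S → i + r * p ∈ S) : IsPushedUpRunner p i S := by
  have hdown : ∀ n r, i + (r + n) * p ∈ S → i + r * p ∈ S := by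
    intro n
    induction n with
    | zero => simp
    | succ n ih => exact fun r hr => ih r (h _ hr)
  intro x hx hxi u hux hui
  rw [← add_div_mul_of_mod_eq hxi] at hx hux
  rw [← add_div_mul_of_mod_eq hui] at hux ⊢
  have : u / p < x / p := (strictMono_add_mul (by omega) i).lt_iff_lt.mp hux
  exact hdown (x / p - u / p) (u / p) (by rwa [Nat.add_sub_cancel' this.le])

def moveBead (p i r : ℕ) (S : Finset ℕ) : Finset ℕ := insert (i + r * p) (S.erase (i + (r + 1) * p))

section MoveBead

variable {p i r : ℕ} {S : Finset ℕ}

lemma F2.le_or_le_of_gap (hS : F2 p i S) (hi : i < p) (hgap : i + r * p ∉ S) :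
    ∀ x ∈ S, x ≤ i + r * p ∨ i + (r + 1) * p ≤ x := by
  intro x hx
  by_contra! h
  have hxi := hS _ (add_mul_mod_of_lt hi r) hgap x hx h.1
  rw [← add_div_mul_of_mod_eq hxi] at h
  have h1 := (strictMono_add_mul (by omega) i).lt_iff_lt.mp h.1
  have h2 := (strictMono_add_mul (by omega) i).lt_iff_lt.mp h.2
  omega

lemma F2.moveBead_of_gap (hS : F2 p i S) (hi : i < p) (hgap : i + r * p ∉ S) :
    F2 p i (moveBead p i r S) := by
  intro q hqi hq b hb hqb
  simp only [moveBead, mem_insert, mem_erase, not_or, not_and_or, not_not] at hq hb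
  rcases hb with rfl | ⟨-, hb⟩
  · exact add_mul_mod_of_lt hi r
  · rcases hq.2 with rfl | hq
    · exact hS _ (add_mul_mod_of_lt hi r) hgap b hb (by nlinarith)
    · exact hS q hqi hq b hb hqb

lemma runnerSet_insert_erase {k c d : ℕ} (hd : d % p = k) :
    runnerSet p k (insert d (S.erase c)) = insert d ((runnerSet p k S).erase c) := by
  rw [runnerSet, filter_insert, if_pos hd, filter_erase, runnerSet]

lemma pushUpRunner_moveBead (hi : i < p) (hc : i + (r + 1) * p ∈ S) (hgap : i + r * p ∉ S) :
    pushUpRunner p i (moveBead p i r S) = pushUpRunner p i S := by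
  have hcard := card_swap (S := runnerSet p i S) (mem_runnerSet.mpr ⟨hc, add_mul_mod_of_lt hi _⟩)
    (d := i + r * p) (fun h => hgap (mem_runnerSet.mp h).1)
  rw [← runnerSet_insert_erase (add_mul_mod_of_lt hi r)] at hcard
  unfold moveBead pushUpRunner
  rw [hcard, filter_insert, if_neg (by simp [add_mul_mod_of_lt hi r]), filter_erase,
    erase_eq_of_notMem (by simp [add_mul_mod_of_lt hi])]

lemma sum_runnerSet_moveBead (hi : i < p) (hc : i + (r + 1) * p ∈ S) (hgap : i + r * p ∉ S) :
    ∑ x ∈ runnerSet p i (moveBead p i r S), x + p =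
      ∑ x ∈ runnerSet p i S, x := by
  rw [moveBead, runnerSet_insert_erase (add_mul_mod_of_lt hi r), sum_insert (by simp [hgap]),
    ← add_sum_erase _ _ (mem_runnerSet.mpr ⟨hc, add_mul_mod_of_lt hi _⟩)]
  ring

lemma F2.partOfSet_moveBead (hS : F2 p i S) (hi : i < p) (hc : i + (r + 1) * p ∈ S)
    (hgap : i + r * p ∉ S) (t : ℕ) :
    partOfSet S t = partOfSet (moveBead p i r S) t +
      if t = countAbove S (i + (r + 1) * p) then p else 0 := by
  rw [moveBead, partOfSet_swap (by nlinarith) hc hgap (hS.le_or_le_of_gap hi hgap)]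
  congr 2
  ring_nf
  omega

lemma runnerRows_moveBead (hi : i < p) :
    runnerRows p i (moveBead p i r S) =
      insert r ((runnerRows p i S).erase (r + 1)) := by
  ext v
  have hinj := (strictMono_add_mul (p := p) (by omega) i).injective
  simp only [moveBead, mem_runnerRows hi, mem_insert, mem_erase, ne_eq, hinj.eq_iff]

lemma F2.countAbove_runnerRows (hS : F2 p i S) (hi : i < p) (hgap : i + r * p ∉ S) :
    countAbove (runnerRows p i S) (r + 1) = countAbove S (i + (r + 1) * p) := by
  rw [← countAbove_image_of_strictMono (strictMono_add_mul (p := p) (by omega) i),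
    ← runnerSet_eq_image_runnerRows hi, countAbove, countAbove]
  congr 1
  ext x
  simp only [mem_filter, mem_runnerSet, and_assoc]
  exact ⟨fun h => ⟨h.1, h.2.2⟩, fun h => ⟨h.1,
    hS _ (add_mul_mod_of_lt hi r) hgap x h.1 (by nlinarith), h.2⟩⟩

lemma F2.quotientPart_moveBead (hS : F2 p i S) (hi : i < p) (hc : i + (r + 1) * p ∈ S)
    (hgap : i + r * p ∉ S) (t : ℕ) :
    quotientPart p i S t =
      quotientPart p i (moveBead p i r S) t +
      if t = countAbove S (i + (r + 1) * p) then 1 else 0 := by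
  rw [quotientPart_eq_partOfSet_runnerRows hi, quotientPart_eq_partOfSet_runnerRows hi,
    runnerRows_moveBead hi, ← hS.countAbove_runnerRows hi hgap,
    partOfSet_swap (Nat.lt_add_one r) ((mem_runnerRows hi).mpr hc)
      (fun h => hgap ((mem_runnerRows hi).mp h)) (fun x _ => by omega)]
  simp

end MoveBead

theorem F2.partOfSet_eq_pushUpRunner_add {p i : ℕ} {S : Finset ℕ} (hS : F2 p i S) (hi : i < p)
    (t : ℕ) : partOfSet S t = partOfSet (pushUpRunner p i S) t + p * quotientPart p i S t := by
  induction hn : ∑ x ∈ runnerSet p i S, x using Nat.strong_induction_on generalizing S with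
  | _ n ih =>
  by_cases h : ∀ r, i + (r + 1) * p ∈ S → i + r * p ∈ S
  · have hpu := isPushedUpRunner_of_succ hi h
    rw [hpu.pushUpRunner_eq hi, hpu.quotientPart_eq_zero hi, mul_zero, add_zero]
  · push Not at h
    obtain ⟨r, hc, hgap⟩ := h
    have hsum := sum_runnerSet_moveBead hi hc hgap
    rw [hS.partOfSet_moveBead hi hc hgap, hS.quotientPart_moveBead hi hc hgap,
      ih _ (by omega) (hS.moveBead_of_gap hi hgap) rfl, pushUpRunner_moveBead hi hc hgap]
    split_ifs <;> ring

/-- The element of `S` below `b` is the runner-`i` position among the `p` positions under `b`: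
it is a bead by pushing-up if `b` is on runner `i`, and by (F2) otherwise. -/
theorem IsPushedUpRunner.isPRestricted_partOfSet {p i : ℕ} {S : Finset ℕ} (hi : i < p)
    (hpu : IsPushedUpRunner p i S) (hS : F2 p i S) : IsPRestricted p (partOfSet S) := by
  refine isPRestricted_partOfSet_of_forall_exists_mem fun b hb hpb =>
    ⟨i + (b - 1 - i) / p * p, ?_, ?_, ?_⟩
  · by_cases hbi : b % p = i
    · exact hpu b hb hbi _ (by have := Nat.div_mul_le_self (b - 1 - i) p; omega)
        (add_mul_mod_of_lt hi _)
    · exact hS.mem_of_lt hb hbi (add_mul_mod_of_lt hi _)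
        (by have := Nat.div_mul_le_self (b - 1 - i) p; omega)
  · have := Nat.lt_div_mul_add (a := b - 1 - i) (b := p) (by omega)
    omega
  · have := Nat.div_mul_le_self (b - 1 - i) p
    omega

theorem IsPRestricted.eq_of_add_mul_eq {p : ℕ} (hp : 0 < p) {a a' g g' : ℕ → ℕ}
    (ha : IsPRestricted p a) (ha' : IsPRestricted p a')
    (h : ∀ t, a t + p * g t = a' t + p * g' t) : a = a' := by
  set d : ℕ → ℤ := fun t => a t - a' t
  have hdvd : ∀ t, (p : ℤ) ∣ d t := fun t => ⟨g' t - g t, by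
    have : (a t : ℤ) + p * g t = a' t + p * g' t := by exact_mod_cast h t
    simp only [d]
    linarith⟩
  have hstep : ∀ t, d (t + 1) = d t := fun t => by
    have h1 := ha.1.1 (Nat.le_add_right t 1)
    have h2 := ha'.1.1 (Nat.le_add_right t 1)
    have h3 := ha.2 t
    have h4 := ha'.2 t
    have hx : d t - d (t + 1) = 0 := Int.eq_zero_of_abs_lt_dvd
      (dvd_sub (hdvd t) (hdvd (t + 1))) (by simp only [d]; rw [abs_lt]; omega)
    linarith
  have hconst : ∀ t, d t = d 0 := fun t => by
    induction t with
    | zero => rfl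
    | succ t ih => rw [hstep, ih]
  obtain ⟨N, hN⟩ := ha.1.2
  obtain ⟨N', hN'⟩ := ha'.1.2
  have hzero : d (N + N') = 0 := by
    simp [d, hN _ (Nat.le_add_right N N'), hN' _ (Nat.le_add_left N' N)]
  funext t
  have := (hconst t).trans ((hconst (N + N')).symm.trans hzero)
  simp only [d] at this
  omega

lemma IsPAdicExpansion.eq_add_mul {p : ℕ} {f : ℕ → ℕ} {c : ℕ → ℕ → ℕ}
    (hc : IsPAdicExpansion p f c) : ∃ g : ℕ → ℕ, ∀ t, f t = c 0 t + p * g t := by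
  obtain ⟨-, N, hvan, hsum⟩ := hc
  refine ⟨fun t => ∑ k ∈ range N, p ^ k * c (k + 1) t, fun t => ?_⟩
  have hlast : ∑ k ∈ range N, p ^ k * c k t = ∑ k ∈ range (N + 1), p ^ k * c k t := by
    rw [sum_range_succ, hvan N t le_rfl, mul_zero, add_zero]
  rw [hsum t, hlast, sum_range_succ', mul_sum, pow_zero, one_mul, add_comm]
  congr 1
  exact sum_congr rfl fun k _ => by ring

theorem IsPAdicExpansion.zero_eq {p : ℕ} (hp : 0 < p) {f a g : ℕ → ℕ} {c : ℕ → ℕ → ℕ}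
    (hc : IsPAdicExpansion p f c) (ha : IsPRestricted p a) (h : ∀ t, f t = a t + p * g t) :
    c 0 = a := by
  obtain ⟨g', hg'⟩ := hc.eq_add_mul
  exact (hc.1 0).eq_of_add_mul_eq hp ha fun t => (hg' t).symm.trans (h t)

theorem F2.pAdicExpansion_zero_eq {p i : ℕ} {S : Finset ℕ} (hS : F2 p i S) (hi : i < p)
    {c : ℕ → ℕ → ℕ} (hc : IsPAdicExpansion p (partOfSet S) c) :
    c 0 = partOfSet (pushUpRunner p i S) :=
  hc.zero_eq (by omega)
    ((isPushedUpRunner_pushUpRunner hi).isPRestricted_partOfSet hi (hS.pushUpRunner_self hi))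
    (hS.partOfSet_eq_pushUpRunner_add hi)

lemma conjugate_partOfSet (S : Finset ℕ) (v : ℕ) :
    conjugate (partOfSet S) v = #(S.filter (v < gapsBelow S ·)) := by
  have hset : {t | v < partOfSet S t} = ((S.filter (v < gapsBelow S ·)).image (countAbove S) :
      Set ℕ) := by
    ext t
    simp only [Set.mem_ofPred_eq, coe_image, coe_filter, Set.mem_image]
    constructor
    · intro ht
      have ht' : t < #S := by
        by_contra! h
        rw [partOfSet_of_card_le h] at ht
        omega
      exact ⟨nthLargest S t, ⟨nthLargest_mem ht', ht⟩, countAbove_nthLargest ht'⟩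
    · rintro ⟨b, ⟨hb, hvb⟩, rfl⟩
      rwa [partOfSet_eq_gapsBelow, nthLargest_countAbove hb]
  rw [conjugate, hset, Nat.card_coe_set_eq, Set.ncard_coe_finset,
    card_image_of_injOn (countAbove_injOn.mono (coe_subset.mpr (filter_subset _ _)))]

def dualSet (L : ℕ) (S : Finset ℕ) : Finset ℕ := ((range L) \ S).image (L - 1 - ·)

section DualSet

variable {L : ℕ} {S : Finset ℕ} {x y : ℕ}

lemma mem_dualSet : x ∈ dualSet L S ↔ x < L ∧ L - 1 - x ∉ S := by
  simp only [dualSet, mem_image, mem_sdiff, mem_range]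
  constructor
  · rintro ⟨u, ⟨hu, huS⟩, rfl⟩
    exact ⟨by omega, by rwa [show L - 1 - (L - 1 - u) = u by omega]⟩
  · rintro ⟨hx, hxS⟩
    exact ⟨L - 1 - x, ⟨by omega, hxS⟩, by omega⟩

lemma reflect_injOn : Set.InjOn (L - 1 - ·) (range L) := fun a ha b hb h => by
  simp only [coe_range, Set.mem_Iio] at ha hb
  simp only at h
  omega

lemma card_dualSet (hS : ∀ b ∈ S, b < L) : #(dualSet L S) + #S = L := by
  rw [dualSet, card_image_of_injOn (reflect_injOn.mono (coe_subset.mpr sdiff_subset)),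
    card_sdiff_of_subset (fun b hb => mem_range.mpr (hS b hb)), card_range,
    Nat.sub_add_cancel (by simpa using card_le_card fun b hb => mem_range.mpr (hS b hb))]

lemma countAbove_dualSet (hy : y < L) :
    countAbove (dualSet L S) y = gapsBelow S (L - 1 - y) := by
  have : (dualSet L S).filter (y < ·) = ((range (L - 1 - y)).filter (· ∉ S)).image (L - 1 - ·) := by
    ext x
    simp only [mem_filter, mem_dualSet, mem_image, mem_range]
    constructor
    · rintro ⟨⟨hx, hxS⟩, hyx⟩
      exact ⟨L - 1 - x, ⟨by omega, hxS⟩, by omega⟩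
    · rintro ⟨u, ⟨hu, huS⟩, rfl⟩
      exact ⟨⟨by omega, by rwa [show L - 1 - (L - 1 - u) = u by omega]⟩, by omega⟩
  rw [countAbove, this, card_image_of_injOn (reflect_injOn.mono (coe_subset.mpr fun x hx =>
    mem_range.mpr (by have := mem_range.mp (mem_filter.mp hx).1; omega))), gapsBelow]

lemma gapsBelow_dualSet (hS : ∀ b ∈ S, b < L) (hy : y < L) :
    gapsBelow (dualSet L S) y = #(S.filter (L - 1 - y < ·)) := by
  have : (range y).filter (· ∉ dualSet L S) = (S.filter (L - 1 - y < ·)).image (L - 1 - ·) := by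
    ext x
    simp only [mem_filter, mem_dualSet, mem_image, mem_range, not_and, not_not]
    constructor
    · rintro ⟨hx, hxS⟩
      exact ⟨L - 1 - x, ⟨hxS (by omega), by omega⟩, by omega⟩
    · rintro ⟨b, ⟨hb, hyb⟩, rfl⟩
      have := hS b hb
      exact ⟨by omega, fun _ => by rwa [show L - 1 - (L - 1 - b) = b by omega]⟩
  rw [gapsBelow, this, card_image_of_injOn (reflect_injOn.mono fun b hb => by
    simpa using hS b (mem_filter.mp hb).1)]

/-- The gap of `S` that becomes the `v`-th largest element of `dualSet L S` is the one with `v`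
gaps below it. -/
theorem partOfSet_dualSet (hS : ∀ b ∈ S, b < L) :
    partOfSet (dualSet L S) = conjugate (partOfSet S) := by
  funext v
  rw [conjugate_partOfSet]
  rcases lt_or_ge v #(dualSet L S) with hv | hv
  · obtain ⟨hyL, hγ⟩ := mem_dualSet.mp (nthLargest_mem hv)
    set y := nthLargest (dualSet L S) v
    have hgaps : gapsBelow S (L - 1 - y) = v := by
      rw [← countAbove_dualSet hyL, countAbove_nthLargest hv]
    rw [partOfSet_eq_gapsBelow, gapsBelow_dualSet hS hyL]
    congr 1
    refine filter_congr fun b hb => ⟨fun hlt => ?_, fun hlt => ?_⟩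
    · calc v = gapsBelow S (L - 1 - y) := hgaps.symm
        _ < gapsBelow S (L - 1 - y + 1) := by rw [gapsBelow_succ_of_notMem hγ]; omega
        _ ≤ gapsBelow S b := gapsBelow_mono S hlt
    · by_contra! hle
      have := gapsBelow_mono S hle
      have := ne_of_mem_of_not_mem hb hγ
      omega
  · rw [partOfSet_of_card_le hv, eq_comm, card_eq_zero, filter_eq_empty_iff]
    intro b hb
    have hL := gapsBelow_add_card_filter_lt S L
    rw [filter_true_of_mem hS] at hL
    have := gapsBelow_mono S (hS b hb).le
    have := card_dualSet hS
    omega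

end DualSet

lemma exists_forall_lt_mul {p : ℕ} (hp : 0 < p) (B : Finset ℕ) : ∃ M, ∀ b ∈ B, b < p * M :=
  ⟨B.sup id + 1, fun b hb => by
    have := le_sup (f := id) hb
    have := Nat.le_mul_of_pos_left (B.sup id + 1) hp
    simp only [id] at *
    omega⟩

section DualRunners

variable {p M j : ℕ} {B : Finset ℕ}

lemma reflect_add_mul {k v : ℕ} (hk : k < p) (hv : v < M) :
    p * M - 1 - (k + v * p) = (p - 1 - k) + (M - 1 - v) * p := by
  obtain ⟨l, rfl⟩ := Nat.exists_eq_add_of_lt hk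
  obtain ⟨w, rfl⟩ := Nat.exists_eq_add_of_lt hv
  rw [show k + l + 1 - 1 - k = l by omega, show v + w + 1 - 1 - v = w by omega,
    Nat.sub_sub, Nat.sub_eq_iff_eq_add (by nlinarith)]
  ring

lemma add_mul_lt_mul_iff {k v : ℕ} (hk : k < p) : k + v * p < p * M ↔ v < M := by
  constructor
  · intro h
    by_contra! hv
    nlinarith
  · intro hv
    nlinarith

lemma reflect_mod_div {x : ℕ} (hx : x < p * M) :
    (p * M - 1 - x) % p = p - 1 - x % p ∧ (p * M - 1 - x) / p = M - 1 - x / p := by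
  have hp : 0 < p := by rcases Nat.eq_zero_or_pos p with rfl | h <;> simp_all
  have hxp := Nat.mod_lt x hp
  rw [← Nat.mod_add_div' x p] at hx
  rw [← Nat.mod_add_div' x p, reflect_add_mul hxp ((add_mul_lt_mul_iff hxp).mp hx),
    add_mul_mod_of_lt (by omega), add_mul_div_of_lt (by omega), Nat.mod_add_div']
  exact ⟨rfl, rfl⟩

lemma F3.dualSet (hj : j < p) (h : F3 p j B) :
    F2 p (p - 1 - j) (dualSet (p * M) B) := by
  intro q hqj hq b hb hqb
  obtain ⟨hbL, hbB⟩ := mem_dualSet.mp hb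
  have hqB : p * M - 1 - q ∈ B := by
    by_contra hqB
    exact hq (mem_dualSet.mpr ⟨by omega, hqB⟩)
  have hq' := (reflect_mod_div (show q < p * M by omega)).1
  have hb' := (reflect_mod_div hbL).1
  have := Nat.mod_lt q (show 0 < p by omega)
  have := Nat.mod_lt b (show 0 < p by omega)
  by_contra hbj
  exact hbB (h _ hqB (by omega) _ (by omega) (by omega))

lemma runnerRows_dualSet (hj : j < p) :
    runnerRows p (p - 1 - j) (dualSet (p * M) B) = dualSet M (runnerRows p j B) := by
  ext v
  rw [mem_runnerRows (by omega), mem_dualSet, mem_dualSet, mem_runnerRows hj,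
    add_mul_lt_mul_iff (by omega)]
  constructor <;> rintro ⟨hv, h⟩ <;> refine ⟨hv, ?_⟩
  · rwa [reflect_add_mul (by omega) hv, show p - 1 - (p - 1 - j) = j by omega] at h
  · rwa [reflect_add_mul (by omega) hv, show p - 1 - (p - 1 - j) = j by omega]

lemma runnerRows_lt (hj : j < p) (hB : ∀ b ∈ B, b < p * M) :
    ∀ v ∈ runnerRows p j B, v < M := fun _ hv =>
  (add_mul_lt_mul_iff hj).mp (hB _ ((mem_runnerRows hj).mp hv))

lemma card_runnerSet_dualSet (hj : j < p) (hB : ∀ b ∈ B, b < p * M) :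
    #(runnerSet p (p - 1 - j) (dualSet (p * M) B)) + #(runnerSet p j B) = M := by
  rw [← card_runnerRows (by omega), ← card_runnerRows hj, runnerRows_dualSet hj]
  exact card_dualSet (runnerRows_lt hj hB)

lemma quotientPart_dualSet (hj : j < p) (hB : ∀ b ∈ B, b < p * M) :
    quotientPart p (p - 1 - j) (dualSet (p * M) B) = conjugate (quotientPart p j B) := by
  rw [quotientPart_eq_partOfSet_runnerRows (by omega), runnerRows_dualSet hj,
    partOfSet_dualSet (runnerRows_lt hj hB), quotientPart_eq_partOfSet_runnerRows hj]

lemma lt_of_mem_pushUpRunner (hj : j < p) (hB : ∀ b ∈ B, b < p * M) :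
    ∀ x ∈ pushUpRunner p j B, x < p * M := by
  intro x hx
  rcases (mem_pushUpRunner hj).mp hx with ⟨-, hxB⟩ | ⟨hxj, hxv⟩
  · exact hB x hxB
  · have := card_le_card fun v hv => mem_range.mpr (runnerRows_lt hj hB v hv)
    rw [card_range, card_runnerRows hj] at this
    rw [← add_div_mul_of_mod_eq hxj, add_mul_lt_mul_iff hj]
    omega

lemma dualSet_pushUpRunner_dualSet (hj : j < p) (hB : ∀ b ∈ B, b < p * M) :
    dualSet (p * M) (pushUpRunner p (p - 1 - j) (dualSet (p * M) B)) = pushUpRunner p j B := by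
  have hcard := card_runnerSet_dualSet hj hB
  ext x
  rw [mem_dualSet, mem_pushUpRunner (by omega), mem_pushUpRunner hj, mem_dualSet]
  have hp : 0 < p := by omega
  have := Nat.mod_lt x hp
  by_cases hxL : x < p * M
  · obtain ⟨hmod, hdiv⟩ := reflect_mod_div hxL
    have hxM : x / p < M := (Nat.div_lt_iff_lt_mul hp).mpr (by rwa [mul_comm])
    rw [hmod, hdiv, show p * M - 1 - (p * M - 1 - x) = x by omega]
    by_cases hxj : x % p = j
    · simp only [hxj, ne_eq, not_true_eq_false, false_and, true_and, false_or, hxL]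
      omega
    · simp only [hxj, ne_eq, not_false_eq_true, true_and, false_and, or_false, hxL]
      constructor
      · intro h
        by_contra hxB
        exact h (Or.inl ⟨by omega, by omega, hxB⟩)
      · rintro hxB (⟨-, -, h⟩ | ⟨h, -⟩)
        exacts [h hxB, by omega]
  · simp only [hxL, false_and, false_iff, not_or, not_and]
    exact ⟨fun _ hxB => hxL (hB x hxB), fun hxj hxv => hxL
      (lt_of_mem_pushUpRunner hj hB x ((mem_pushUpRunner hj).mpr (Or.inr ⟨hxj, hxv⟩)))⟩

end DualRunners

section PushUp

variable {p i j : ℕ} {B : Finset ℕ}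

lemma mem_pushUp (hp : 0 < p) {x : ℕ} : x ∈ pushUp p B ↔ x / p < #(runnerSet p (x % p) B) := by
  simp only [pushUp, mem_biUnion, mem_range, mem_image]
  constructor
  · rintro ⟨k, hk, v, hv, rfl⟩
    rwa [add_mul_mod_of_lt hk, add_mul_div_of_lt hk]
  · exact fun h => ⟨x % p, Nat.mod_lt x hp, x / p, h, Nat.mod_add_div' x p⟩

lemma card_runnerSet_pushUpRunner {k : ℕ} (hj : j < p) :
    #(runnerSet p k (pushUpRunner p j B)) = #(runnerSet p k B) := by
  rcases eq_or_ne k j with rfl | hkj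
  exacts [card_runnerSet_pushUpRunner_self hj, by rw [runnerSet_pushUpRunner_of_ne hj hkj]]

/-- Condition (F1) says that every runner other than `i` and `j` is already pushed up. -/
lemma F1.pushUpRunner_pushUpRunner (hi : i < p) (hj : j < p) (h : F1 p i j B) :
    pushUpRunner p i (pushUpRunner p j B) = pushUp p B := by
  have hp : 0 < p := by omega
  ext x
  rw [mem_pushUpRunner hi, mem_pushUp hp, mem_pushUpRunner hj, card_runnerSet_pushUpRunner hj]
  have hxp := Nat.mod_lt x hp
  by_cases hxi : x % p = i
  · simp [hxi]
  by_cases hxj : x % p = j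
  · have hji : j ≠ i := hxj ▸ hxi
    simp [hxj, hji]
  simp only [hxi, hxj, ne_eq, not_false_eq_true, true_and, false_and, or_false]
  exact IsPushedUpRunner.mem_iff hxp (h _ hxp hxi hxj) rfl

lemma quotientPart_pushUpRunner_of_ne (hj : j < p) (hij : i ≠ j) :
    quotientPart p i (pushUpRunner p j B) = quotientPart p i B := by
  funext t
  simp only [quotientPart, runnerSet_pushUpRunner_of_ne hj hij, mem_pushUpRunner hj]
  congr 1
  refine filter_congr fun u _ => ?_
  constructor
  · rintro ⟨hui, h⟩
    exact ⟨hui, fun hu => h (Or.inl ⟨hui ▸ hij, hu⟩)⟩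
  · rintro ⟨hui, h⟩
    refine ⟨hui, ?_⟩
    rintro (⟨-, hu⟩ | ⟨huj, -⟩)
    exacts [h hu, hij (hui ▸ huj)]

/-- On a runner where both (F2) and (F3) hold there are no gaps below beads: a gap `u` with a
bead above it forces a bead at `u + 1` by (F3), which (F2) puts on the same runner as `u`. -/
lemma F2.isPushedUpRunner_of_F3 (hp : 2 ≤ p) (h2 : F2 p i B) (h3 : F3 p i B) :
    IsPushedUpRunner p i B := by
  intro x hx hxi u hux hui
  by_contra hu
  have hu1 : (u + 1) % p ≠ i := by
    rw [Nat.add_mod, hui]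
    rcases lt_or_ge (i + 1 % p) p with h | h
    · rw [Nat.mod_eq_of_lt h, Nat.one_mod_eq_one.mpr (by omega)]
      omega
    · have := Nat.mod_lt u (show 0 < p by omega)
      rw [Nat.one_mod_eq_one.mpr (by omega)] at h
      rw [Nat.one_mod_eq_one.mpr (by omega), show i + 1 = p by omega, Nat.mod_self]
      omega
  have hpx : u + p ≤ x := by
    have := (Nat.modEq_iff_dvd' hux.le).mp (hui.trans hxi.symm)
    have := Nat.le_of_dvd (by omega) this
    omega
  exact hu1 (h2 u hui hu _ (h3 x hx hxi _ (by omega) hu1) (Nat.lt_add_one u))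

theorem F2.partOfSet_pushUpRunner_eq (hp : 2 ≤ p) (hi : i < p) (hj : j < p) (h1 : F1 p i j B)
    (h2 : F2 p i B) (h3 : F3 p j B) (t : ℕ) :
    partOfSet (pushUpRunner p j B) t = partOfSet (pushUp p B) t + p * quotientPart p i B t := by
  obtain ⟨hF2, hq⟩ : F2 p i (pushUpRunner p j B) ∧
      quotientPart p i (pushUpRunner p j B) = quotientPart p i B := by
    rcases eq_or_ne i j with rfl | hij
    · rw [(h2.isPushedUpRunner_of_F3 hp h3).pushUpRunner_eq hi]
      exact ⟨h2, rfl⟩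
    · exact ⟨h2.pushUpRunner_of_ne hj hij, quotientPart_pushUpRunner_of_ne hj hij⟩
  rw [hF2.partOfSet_eq_pushUpRunner_add hi, h1.pushUpRunner_pushUpRunner hi hj, hq]

end PushUp

/-- For a β-set `B` of `λ` satisfying (F1)–(F3) for runners `i`, `j`:
(a) `λ − λ(0) = p·λ^{(i)}`; (b) `λ' − λ'(0) = p·(λ^{(j)})'`; and
(c) `(λ'(0))' = κ_p(λ) + (λ − λ(0))`, where `κ_p(λ)` is the partition represented by the
pushed-up set. -/
theorem phi_eq_of_F_conditions (p : ℕ) (hp : p.Prime) (f : ℕ → ℕ) (hf : IsPartition f)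
    (s : ℕ) (B : Finset ℕ) (hB : IsBetaSet f s B)
    (i j : ℕ) (hi : i < p) (hj : j < p)
    (h1 : F1 p i j B) (h2 : F2 p i B) (h3 : F3 p j B)
    (c c' : ℕ → ℕ → ℕ)
    (hc : IsPAdicExpansion p f c) (hc' : IsPAdicExpansion p (conjugate f) c') :
    (∀ t, f t = c 0 t + p * quotientPart p i B t) ∧
    (∀ t, conjugate f t = c' 0 t + p * conjugate (quotientPart p j B) t) ∧
    (∀ t, conjugate (c' 0) t = partOfSet (pushUp p B) t + (f t - c 0 t)) := by
  obtain rfl := hB.partOfSet_eq hf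
  have hj' : p - 1 - j < p := by have := hp.pos; omega
  obtain ⟨M, hBM⟩ := exists_forall_lt_mul hp.pos B
  rw [← partOfSet_dualSet hBM] at hc' ⊢
  have hF2' := h3.dualSet (M := M) hj
  have hc0 := h2.pAdicExpansion_zero_eq hi hc
  have hc0' := hF2'.pAdicExpansion_zero_eq hj' hc'
  have hconj : conjugate (c' 0) = partOfSet (pushUpRunner p j B) := by
    rw [hc0', ← partOfSet_dualSet (lt_of_mem_pushUpRunner hj' fun b hb => (mem_dualSet.mp hb).1),
      dualSet_pushUpRunner_dualSet hj hBM]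
  refine ⟨fun t => ?_, fun t => ?_, fun t => ?_⟩
  · rw [hc0]
    exact h2.partOfSet_eq_pushUpRunner_add hi t
  · rw [hc0', ← quotientPart_dualSet hj hBM]
    exact hF2'.partOfSet_eq_pushUpRunner_add hj' t
  · rw [hconj, h2.partOfSet_pushUpRunner_eq hp.two_le hi hj h1 h3, hc0,
      h2.partOfSet_eq_pushUpRunner_add hi t, Nat.add_sub_cancel_left]
end

section
/- Let p be an odd prime, let r > 0, and let λ (a partition of n) and μ (a partition of n+r) form a pair of adjacent JM-partitions. Then λ − λ(0) = μ − μ(0) and λ' − λ'(0) = μ' − μ'(0), where ξ(0) denotes the 0-th term of the p-adic expansion of a partition ξ and ξ' its conjugate. In particular, the pairs Φ(λ) = ((λ'(0))' | λ' − λ'(0)) and Φ(μ) = ((μ'(0))' | μ' − μ'(0)) have equal second components. -/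
/-- `f` is a partition of `n`. -/
def IsPartitionOf (n : ℕ) (f : ℕ → ℕ) : Prop :=
  IsPartition f ∧ ∃ N, (∀ i, N ≤ i → f i = 0) ∧ ∑ i ∈ Finset.range N, f i = n

/-- Hook length of the node `(i, j)` (0-indexed). -/
noncomputable def hookLength (f : ℕ → ℕ) (i j : ℕ) : ℕ :=
  (f i - (j + 1)) + (conjugate f j - (i + 1)) + 1

/-- `f` is a JM-partition for the prime `p`. -/
def IsJM (p : ℕ) (f : ℕ → ℕ) : Prop :=
  ¬ ∃ a b x y : ℕ, b < f a ∧ y < f a ∧ b < f x ∧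
      0 < padicValNat p (hookLength f a b) ∧
      padicValNat p (hookLength f x b) ≠ padicValNat p (hookLength f a b) ∧
      padicValNat p (hookLength f a y) ≠ padicValNat p (hookLength f a b)

/-- The `p`-residue of the node `(i, j)` (0-indexed): `(j - i) mod p`. -/
def pResidue (p : ℕ) (i j : ℕ) : ZMod p := (j : ZMod p) - (i : ZMod p)

/-- The node `(i, j)` (0-indexed) is addable for `f`. -/
def IsAddable (f : ℕ → ℕ) (i j : ℕ) : Prop :=
  f i = j ∧ (i = 0 ∨ j < f (i - 1))

/-- The node `(i, j)` (0-indexed) is removable for `f`. -/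
def IsRemovable (f : ℕ → ℕ) (i j : ℕ) : Prop :=
  f i = j + 1 ∧ f (i + 1) ≤ j

/-- `[g]` is obtained from `[f]` by adding all `r` addable nodes of `p`-residue `t`, `[f]`
having exactly `r` addable nodes and no removable nodes of this residue. -/
def AdjacentAt (p r : ℕ) (t : ZMod p) (f g : ℕ → ℕ) : Prop :=
  Nat.card {x : ℕ × ℕ | IsAddable f x.1 x.2 ∧ pResidue p x.1 x.2 = t} = r ∧
  (∀ i j, IsRemovable f i j → pResidue p i j ≠ t) ∧
  (∀ i j : ℕ, j < g i ↔ (j < f i ∨ (IsAddable f i j ∧ pResidue p i j = t)))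

/-- `f` and `g` form a pair of adjacent JM-partitions. -/
def AdjacentJMPair (p r : ℕ) (f g : ℕ → ℕ) : Prop :=
  IsJM p f ∧ IsJM p g ∧ ∃ t : ZMod p, AdjacentAt p r t f g


/-!
Write `ξ = ξ(0) + p • F` with `F` weakly decreasing. Since `ξ(0)` is `p`-restricted, the
differences of consecutive parts of `ξ - ξ(0)` are `p * ((ξ j - ξ (j + 1)) / p)`, so `ξ - ξ(0)`
only depends on the quotients `(ξ j - ξ (j + 1)) / p`. Adding all addable nodes of residue `t`
to `λ`, which has no removable node of residue `t`, changes each difference `λ j - λ (j + 1)` by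
at most one and never across a multiple of `p`: crossing one would produce either a removable
node of residue `t` or an addable node of residue `t` that was not added. Conjugating turns such
a pair into one for the residue `-t`, which gives the statement for `λ'` and `μ'`.
-/

theorem eq_of_eq_succ_add {u v e : ℕ → ℕ} {N : ℕ} (hu : ∀ i, N ≤ i → u i = 0)
    (hv : ∀ i, N ≤ i → v i = 0) (hue : ∀ k, u k = u (k + 1) + e k)
    (hve : ∀ k, v k = v (k + 1) + e k) (k : ℕ) : u k = v k := by
  suffices ∀ m k, N ≤ k + m → u k = v k from this N k (by omega)
  intro m
  induction m with
  | zero => intro k hk; rw [hu k (by omega), hv k (by omega)]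
  | succ m ih => intro k hk; rw [hue k, hve k, ih (k + 1) (by omega)]

namespace IsPartition

variable {f : ℕ → ℕ}

theorem lt_iff_lt_conjugate (hf : IsPartition f) (i j : ℕ) : j < f i ↔ i < conjugate f j := by
  obtain ⟨hanti, N, hN⟩ := hf
  have hex : ∃ m, f m ≤ j := ⟨N, by simp [hN N le_rfl]⟩
  have hset : {i | j < f i} = Set.Iio (Nat.find hex) := by
    ext i
    show j < f i ↔ i < Nat.find hex
    refine ⟨fun hi => ?_, fun hi => not_le.1 (Nat.find_min hex hi)⟩
    by_contra hle
    exact (hanti (not_lt.1 hle) |>.trans (Nat.find_spec hex)).not_gt hi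
  have hconj : conjugate f j = Nat.find hex := by
    rw [conjugate, hset]
    exact Set.ncard_Iio_nat _
  rw [hconj]
  exact Set.ext_iff.1 hset i

theorem isAddable_iff_conjugate (hf : IsPartition f) (i j : ℕ) :
    IsAddable f i j ↔ IsAddable (conjugate f) j i := by
  have G := hf.lt_iff_lt_conjugate
  unfold IsAddable
  have := G i j; have := G (i - 1) j; have := G i (j - 1)
  omega

theorem isRemovable_iff_conjugate (hf : IsPartition f) (i j : ℕ) :
    IsRemovable f i j ↔ IsRemovable (conjugate f) j i := by
  have G := hf.lt_iff_lt_conjugate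
  unfold IsRemovable
  have := G i j; have := G i (j + 1); have := G (i + 1) j
  omega

theorem conjugate (hf : IsPartition f) : IsPartition (conjugate f) := by
  refine ⟨fun j j' hjj' => not_lt.1 fun hlt => ?_, f 0, fun j hj => ?_⟩
  · have := (hf.lt_iff_lt_conjugate _ _).2 hlt
    exact lt_irrefl _ ((hf.lt_iff_lt_conjugate _ _).1 (hjj'.trans_lt this))
  · by_contra h
    have := (hf.lt_iff_lt_conjugate 0 j).2 (Nat.pos_of_ne_zero h)
    omega

end IsPartition

theorem pResidue_swap (p i j : ℕ) : pResidue p i j = -pResidue p j i := by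
  unfold pResidue
  ring

theorem pResidue_eq_pResidue_iff (p i j i' j' : ℕ) :
    pResidue p i j = pResidue p i' j' ↔ (p : ℤ) ∣ ((j : ℤ) - i) - ((j' : ℤ) - i') := by
  have hcast (i j : ℕ) : pResidue p i j = (((j : ℤ) - i : ℤ) : ZMod p) := by
    unfold pResidue
    push_cast
    rfl
  rw [hcast, hcast, eq_comm, ZMod.intCast_eq_intCast_iff_dvd_sub]

namespace IsPAdicExpansion

variable {p : ℕ} {f : ℕ → ℕ} {c : ℕ → ℕ → ℕ}

theorem exists_eq_add_mul (hc : IsPAdicExpansion p f c) :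
    ∃ F : ℕ → ℕ, Antitone F ∧ ∀ j, f j = c 0 j + p * F j := by
  obtain ⟨hres, N, hN, hsum⟩ := hc
  refine ⟨fun j => ∑ i ∈ Finset.range N, p ^ i * c (i + 1) j, fun j j' hjj' => ?_, fun j => ?_⟩
  · exact Finset.sum_le_sum fun i _ => Nat.mul_le_mul_left _ ((hres (i + 1)).1.1 hjj')
  · have hsum' : f j = ∑ i ∈ Finset.range (N + 1), p ^ i * c i j := by
      rw [Finset.sum_range_succ, hN N j le_rfl, mul_zero, add_zero, hsum]
    rw [hsum', Finset.sum_range_succ', Finset.mul_sum, add_comm, pow_zero, one_mul]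
    simp only [pow_succ, mul_comm _ p, mul_assoc]

theorem sub_zero_eq (hp : 0 < p) (hc : IsPAdicExpansion p f c) (k : ℕ) :
    f k - c 0 k = (f (k + 1) - c 0 (k + 1)) + p * ((f k - f (k + 1)) / p) := by
  obtain ⟨F, hF, hfF⟩ := hc.exists_eq_add_mul
  have hc0 : c 0 (k + 1) ≤ c 0 k := (hc.1 0).1.1 k.le_succ
  have hdigit : c 0 k - c 0 (k + 1) < p := by have := (hc.1 0).2 k; omega
  have hFk : p * F (k + 1) ≤ p * F k := Nat.mul_le_mul_left _ (hF k.le_succ)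
  have hdiff : f k - f (k + 1) = (c 0 k - c 0 (k + 1)) + p * (F k - F (k + 1)) := by
    rw [hfF, hfF, Nat.mul_sub]
    omega
  rw [hdiff, Nat.add_mul_div_left _ _ hp, Nat.div_eq_of_lt hdigit, zero_add, Nat.mul_sub,
    hfF, hfF]
  omega

end IsPAdicExpansion

theorem sub_zero_eq_of_div_eq {p : ℕ} (hp : 0 < p) {f g : ℕ → ℕ} {cf cg : ℕ → ℕ → ℕ}
    (hf : IsPartition f) (hg : IsPartition g)
    (hcf : IsPAdicExpansion p f cf) (hcg : IsPAdicExpansion p g cg)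
    (hdiv : ∀ j, (g j - g (j + 1)) / p = (f j - f (j + 1)) / p) (k : ℕ) :
    f k - cf 0 k = g k - cg 0 k := by
  obtain ⟨Nf, hNf⟩ := hf.2
  obtain ⟨Ng, hNg⟩ := hg.2
  refine eq_of_eq_succ_add (v := fun k => g k - cg 0 k) (N := max Nf Ng) (fun i hi => ?_)
    (fun i hi => ?_) (hcf.sub_zero_eq hp) (fun j => ?_) k
  · rw [hNf i (by omega), Nat.zero_sub]
  · rw [hNg i (by omega), Nat.zero_sub]
  · rw [hcg.sub_zero_eq hp, hdiv]

def AddsAllNodesOfResidue (p : ℕ) (t : ZMod p) (f g : ℕ → ℕ) : Prop :=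
  (∀ i j, IsRemovable f i j → pResidue p i j ≠ t) ∧
  ∀ i j : ℕ, j < g i ↔ (j < f i ∨ (IsAddable f i j ∧ pResidue p i j = t))

theorem AdjacentAt.addsAllNodesOfResidue {p r : ℕ} {t : ZMod p} {f g : ℕ → ℕ}
    (h : AdjacentAt p r t f g) : AddsAllNodesOfResidue p t f g :=
  h.2

namespace AddsAllNodesOfResidue

variable {p : ℕ} {t : ZMod p} {f g : ℕ → ℕ}

theorem conjugate (h : AddsAllNodesOfResidue p t f g) (hf : IsPartition f) (hg : IsPartition g) :
    AddsAllNodesOfResidue p (-t) (conjugate f) (conjugate g) := by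
  refine ⟨fun i j hrem hres => h.1 j i ((hf.isRemovable_iff_conjugate j i).2 hrem) ?_,
    fun i j => ?_⟩
  · rw [pResidue_swap, hres, neg_neg]
  · rw [← hg.lt_iff_lt_conjugate, h.2, hf.lt_iff_lt_conjugate, hf.isAddable_iff_conjugate,
      pResidue_swap p j i, neg_eq_iff_eq_neg]

theorem apply_eq_or (h : AddsAllNodesOfResidue p t f g) (i : ℕ) :
    g i = f i ∨ (g i = f i + 1 ∧ IsAddable f i (f i) ∧ pResidue p i (f i) = t) := by
  by_cases hA : IsAddable f i (f i) ∧ pResidue p i (f i) = t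
  · refine Or.inr ⟨eq_of_forall_lt_iff fun j => ?_, hA⟩
    rw [h.2]
    constructor
    · rintro (hj | ⟨⟨rfl, -⟩, -⟩) <;> omega
    · intro hj
      rcases Nat.lt_succ_iff_lt_or_eq.1 hj with hj | rfl
      exacts [Or.inl hj, Or.inr hA]
  · refine Or.inl (eq_of_forall_lt_iff fun j => ?_)
    rw [h.2]
    refine ⟨?_, Or.inl⟩
    rintro (hj | ⟨hadd, hres⟩)
    · exact hj
    · exact absurd (hadd.1 ▸ ⟨hadd, hres⟩) hA

/-- Otherwise the node `(j, f j - 1)` would be removable of residue `t`. -/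
theorem not_dvd_sub_of_addable_succ (h : AddsAllNodesOfResidue p t f g) {j : ℕ}
    (hadd : IsAddable f (j + 1) (f (j + 1))) (hres : pResidue p (j + 1) (f (j + 1)) = t) :
    ¬ p ∣ f j - f (j + 1) := by
  intro hdvd
  have hlt : f (j + 1) < f j := hadd.2.resolve_left j.succ_ne_zero
  refine h.1 j (f j - 1) ⟨by omega, by omega⟩ ?_
  rw [← hres, pResidue_eq_pResidue_iff]
  convert Int.natCast_dvd_natCast.2 hdvd using 1
  rw [Nat.cast_sub (by omega : 1 ≤ f j), Nat.cast_sub hlt.le]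
  push_cast
  ring

/-- Otherwise the node `(j + 1, f (j + 1))` would be addable of residue `t`, hence added. -/
theorem not_dvd_sub_add_one (h : AddsAllNodesOfResidue p t f g) (hp : 1 < p) (hf : Antitone f)
    {j : ℕ} (hres : pResidue p j (f j) = t) (hg : g (j + 1) = f (j + 1)) :
    ¬ p ∣ f j - f (j + 1) + 1 := by
  intro hdvd
  have hle : f (j + 1) ≤ f j := hf j.le_succ
  have hlt : f (j + 1) < f j := by
    refine lt_of_le_of_ne hle fun heq => ?_
    rw [heq, Nat.sub_self, zero_add, Nat.dvd_one] at hdvd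
    omega
  have hadded := (h.2 (j + 1) (f (j + 1))).2 (Or.inr ⟨⟨rfl, Or.inr hlt⟩, ?_⟩)
  · omega
  rw [← hres, eq_comm, pResidue_eq_pResidue_iff]
  convert Int.natCast_dvd_natCast.2 hdvd using 1
  push_cast [Nat.cast_sub hle]
  ring

theorem div_sub_succ_eq (h : AddsAllNodesOfResidue p t f g) (hp : 1 < p) (hf : Antitone f)
    (j : ℕ) : (g j - g (j + 1)) / p = (f j - f (j + 1)) / p := by
  have hle : f (j + 1) ≤ f j := hf j.le_succ
  rcases h.apply_eq_or j with hj | ⟨hj, -, hresj⟩ <;>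
    rcases h.apply_eq_or (j + 1) with hj1 | ⟨hj1, haddj1, hresj1⟩
  · rw [hj, hj1]
  · have hndvd := h.not_dvd_sub_of_addable_succ haddj1 hresj1
    have hlt : f (j + 1) < f j := haddj1.2.resolve_left j.succ_ne_zero
    obtain ⟨d, hd⟩ : ∃ d, f j - f (j + 1) = d + 1 := ⟨f j - f (j + 1) - 1, by omega⟩
    rw [hj, hj1, hd, Nat.succ_div_of_not_dvd (hd ▸ hndvd)]
    congr 1
    omega
  · rw [hj, hj1, ← Nat.succ_div_of_not_dvd (h.not_dvd_sub_add_one hp hf hresj hj1)]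
    congr 1
    omega
  · rw [hj, hj1]
    congr 1
    omega

theorem sub_zero_eq (h : AddsAllNodesOfResidue p t f g) (hp : 1 < p)
    (hf : IsPartition f) (hg : IsPartition g) {cf cg : ℕ → ℕ → ℕ}
    (hcf : IsPAdicExpansion p f cf) (hcg : IsPAdicExpansion p g cg) (k : ℕ) :
    f k - cf 0 k = g k - cg 0 k :=
  sub_zero_eq_of_div_eq (by omega) hf hg hcf hcg (h.div_sub_succ_eq hp hf.1) k

end AddsAllNodesOfResidue

theorem adjacent_JM_pair_padic_general (p : ℕ) (hp : p.Prime)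
    (n r : ℕ)
    (f g : ℕ → ℕ) (hf : IsPartitionOf n f) (hg : IsPartitionOf (n + r) g)
    (hadj : AdjacentJMPair p r f g)
    (cf cg cf' cg' : ℕ → ℕ → ℕ)
    (hcf : IsPAdicExpansion p f cf) (hcg : IsPAdicExpansion p g cg)
    (hcf' : IsPAdicExpansion p (conjugate f) cf')
    (hcg' : IsPAdicExpansion p (conjugate g) cg') :
    (∀ k, f k - cf 0 k = g k - cg 0 k) ∧
    (∀ k, conjugate f k - cf' 0 k = conjugate g k - cg' 0 k) := by
  obtain ⟨-, -, t, hadj⟩ := hadj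
  have h := hadj.addsAllNodesOfResidue
  exact ⟨h.sub_zero_eq hp.one_lt hf.1 hg.1 hcf hcg,
    (h.conjugate hf.1 hg.1).sub_zero_eq hp.one_lt hf.1.conjugate hg.1.conjugate hcf' hcg'⟩

/-- If `f` (a partition of `n`) and `g` (a partition of `n + r`) form a
pair of adjacent JM-partitions, then `λ − λ(0) = μ − μ(0)` and `λ' − λ'(0) = μ' − μ'(0)`,
where `ξ(0)` denotes the 0-th term of the `p`-adic expansion. In particular, `Φ(f)` and
`Φ(g)` have equal second components. -/
theorem adjacent_JM_pair_padic (p : ℕ) (hp : p.Prime) (hodd : Odd p)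
    (n r : ℕ) (hr : 0 < r)
    (f g : ℕ → ℕ) (hf : IsPartitionOf n f) (hg : IsPartitionOf (n + r) g)
    (hadj : AdjacentJMPair p r f g)
    (cf cg cf' cg' : ℕ → ℕ → ℕ)
    (hcf : IsPAdicExpansion p f cf) (hcg : IsPAdicExpansion p g cg)
    (hcf' : IsPAdicExpansion p (conjugate f) cf')
    (hcg' : IsPAdicExpansion p (conjugate g) cg') :
    (∀ k, f k - cf 0 k = g k - cg 0 k) ∧
    (∀ k, conjugate f k - cf' 0 k = conjugate g k - cg' 0 k) :=
  adjacent_JM_pair_padic_general p hp n r f g hf hg hadj cf cg cf' cg' hcf hcg hcf' hcg'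
end

section
/- Let p be a prime, let λ be a partition of n with s-element β-set B, and let ℓ ∈ {1,…,p−1}. Suppose that for every a ≥ 0, if ap+ℓ ∈ B then ap+ℓ−1 ∈ B, and set r := #{a ≥ 0 : ap+ℓ−1 ∈ B and ap+ℓ ∉ B}; assume r ≥ 1. Let B' be obtained from B by interchanging runners ℓ−1 and ℓ, i.e. B' = (B ∖ {b ∈ B : b ≡ ℓ−1 or ℓ (mod p)}) ∪ {ap+ℓ : ap+ℓ−1 ∈ B} ∪ {ap+ℓ−1 : ap+ℓ ∈ B}. Then: (a) [λ] has exactly r addable nodes of p-residue (ℓ−s) mod p and no removable nodes of this p-residue; (b) the partition μ represented by B' is a partition of n+r whose Young diagram is [λ] together with all addable nodes of [λ] of p-residue (ℓ−s) mod p. -/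
/-! The β-numbers `f k + (s - 1 - k)` of `λ` are strictly decreasing, and row `i` has an
addable node of residue `ℓ - s` exactly when its β-number lies on runner `ℓ - 1` with the
position to its right vacant. A removable node of that residue would be a bead on runner `ℓ`
with a vacant position to its left, which the hypothesis on `B` forbids. For the same reason the
runner swap only slides the `r` beads of runner `ℓ - 1` whose right neighbour is vacant one step
to the right, which adds one node at the end of each of these rows. -/

open Finset

lemma image_add_indicator {ι : Type*} [DecidableEq ι] {S A : Finset ι} {b : ι → ℕ} (hAS : A ⊆ S)
    (hb : Set.InjOn b S) :
    S.image (b + (A : Set ι).indicator 1) =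
      (S.image b \ A.image b) ∪ (A.image b).image (· + 1) := by
  ext x
  simp only [mem_union, mem_sdiff, mem_image, Pi.add_apply, not_exists, not_and]
  constructor
  · rintro ⟨k, hk, rfl⟩
    by_cases hkA : k ∈ A
    · exact Or.inr ⟨b k, ⟨k, hkA, rfl⟩, by simp [hkA]⟩
    · refine Or.inl ⟨⟨k, hk, by simp [hkA]⟩, fun a ha hab => hkA ?_⟩
      rw [hb (hAS ha) hk (by simpa [hkA] using hab)] at ha
      exact ha
  · rintro (⟨⟨k, hk, rfl⟩, hnot⟩ | ⟨_, ⟨a, ha, rfl⟩, rfl⟩)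
    · have hkA : k ∉ A := fun h => hnot k h rfl
      exact ⟨k, hk, by simp [hkA]⟩
    · exact ⟨a, hAS ha, by simp [ha]⟩

lemma natCast_eq_natCast_iff_mod_eq {p x c : ℕ} (hc : c < p) : (x : ZMod p) = c ↔ x % p = c := by
  rw [ZMod.natCast_eq_natCast_iff', Nat.mod_eq_of_lt hc]

lemma add_one_mod_eq_iff {p ℓ x : ℕ} (hl1 : 1 ≤ ℓ) (hlp : ℓ < p) :
    (x + 1) % p = ℓ ↔ x % p = ℓ - 1 := by
  rw [← natCast_eq_natCast_iff_mod_eq hlp, ← natCast_eq_natCast_iff_mod_eq (by omega : ℓ - 1 < p),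
    Nat.cast_succ, Nat.cast_pred hl1, eq_sub_iff_add_eq]

lemma exists_eq_mul_add_iff {p c x : ℕ} (hc : c < p) : (∃ a, x = a * p + c) ↔ x % p = c := by
  constructor
  · rintro ⟨a, rfl⟩
    rw [Nat.mul_add_mod_self_right, Nat.mod_eq_of_lt hc]
  · intro hx
    exact ⟨x / p, by rw [← hx, Nat.div_add_mod']⟩

lemma card_setOf_mul_add_mem {p c : ℕ} (hc : c < p) {T : Finset ℕ} (hT : ∀ x ∈ T, x % p = c) :
    Nat.card {a : ℕ | a * p + c ∈ T} = #T := by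
  have hinj : Function.Injective (fun a => a * p + c) := fun a b h =>
    Nat.eq_of_mul_eq_mul_right (by omega) (Nat.add_right_cancel h)
  rw [← Nat.card_image_of_injective hinj, ← Set.ncard_coe_finset, ← Nat.card_coe_set_eq]
  congr
  ext x
  simp only [Set.mem_image, Set.mem_ofPred_eq, mem_coe]
  constructor
  · rintro ⟨a, ha, rfl⟩
    exact ha
  · intro hx
    obtain ⟨a, rfl⟩ := (exists_eq_mul_add_iff hc).2 (hT x hx)
    exact ⟨a, hx, rfl⟩

section AddNodes

variable {f : ℕ → ℕ}

lemma antitone_add_indicator (hf : Antitone f) {A : Set ℕ} (hA : ∀ i ∈ A, IsAddable f i (f i)) :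
    Antitone (f + A.indicator 1) := by
  refine antitone_nat_of_succ_le fun k => ?_
  have hle : f (k + 1) ≤ f k := hf k.le_succ
  by_cases hk1 : k + 1 ∈ A
  · have hlt : f (k + 1) < f k := by simpa using (hA _ hk1).2
    by_cases hk : k ∈ A <;> simp [hk, hk1] <;> omega
  · by_cases hk : k ∈ A <;> simp [hk, hk1] <;> omega

lemma lt_add_indicator_iff {A : Set ℕ} {i j : ℕ} :
    j < (f + A.indicator 1 : ℕ → ℕ) i ↔ j < f i ∨ (i ∈ A ∧ j = f i) := by
  by_cases hi : i ∈ A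
  · simp only [Pi.add_apply, Set.indicator_of_mem hi, Pi.one_apply, hi, true_and]
    omega
  · simp [hi]

lemma IsPartitionOf.add_indicator {n : ℕ} (hf : IsPartitionOf n f) {A : Finset ℕ}
    (hA : ∀ i ∈ A, IsAddable f i (f i)) :
    IsPartitionOf (n + #A) (f + (A : Set ℕ).indicator 1) := by
  obtain ⟨⟨hanti, -⟩, N, hN, hsum⟩ := hf
  obtain ⟨M, hM⟩ := A.exists_nat_subset_range
  have hzero : ∀ i, max N M ≤ i → (f + (A : Set ℕ).indicator 1 : ℕ → ℕ) i = 0 := by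
    intro i hi
    have : i ∉ A := fun h => by have := mem_range.1 (hM h); omega
    simp [hN i (by omega), this]
  refine ⟨⟨antitone_add_indicator hanti hA, _, hzero⟩, _, hzero, ?_⟩
  simp only [Pi.add_apply]
  rw [sum_add_distrib, sum_indicator_subset _ (hM.trans (range_subset_range.2 (le_max_right _ _))),
    ← sum_subset (range_subset_range.2 (le_max_left _ _)) fun i _ hi => hN i (by simpa using hi),
    hsum]
  simp

end AddNodes

def betaNum (f : ℕ → ℕ) (s k : ℕ) : ℕ := f k + (s - 1 - k)

def betaSet (f : ℕ → ℕ) (s : ℕ) : Finset ℕ := (range s).image (betaNum f s)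

section BetaSet

variable {f : ℕ → ℕ} {s : ℕ}

lemma mem_betaSet {x : ℕ} : x ∈ betaSet f s ↔ ∃ k < s, betaNum f s k = x := by
  simp [betaSet]

lemma betaNum_strictAntiOn (hf : Antitone f) : StrictAntiOn (betaNum f s) (Set.Iio s) := by
  intro k hk l hl hkl
  have := hf hkl.le
  simp only [Set.mem_Iio] at hk hl
  simp only [betaNum]
  omega

lemma betaNum_injOn (hf : Antitone f) : Set.InjOn (betaNum f s) (range s) :=
  (betaNum_strictAntiOn hf).injOn.mono fun _ hk => mem_range.1 hk

lemma sort_betaSet (hf : Antitone f) :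
    (betaSet f s).sort (· ≤ ·) = ((List.range s).map (betaNum f s)).reverse := by
  have hanti := betaNum_strictAntiOn (s := s) hf
  have hpairwise : ((List.range s).map (betaNum f s)).Pairwise (· > ·) := by
    refine List.pairwise_map.2 (List.pairwise_lt_range.imp_of_mem ?_)
    intro k l hk hl hkl
    exact hanti (by simpa using hk) (by simpa using hl) hkl
  refine List.Perm.eq_of_pairwise' (r := (· ≤ ·)) (Finset.pairwise_sort _ _)
    (List.pairwise_reverse.2 (hpairwise.imp le_of_lt)) ?_
  rw [← Multiset.coe_eq_coe, Finset.sort_eq, Multiset.coe_reverse, betaSet,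
    Finset.image_val_of_injOn (betaNum_injOn hf)]
  rfl

lemma nthLargest_betaSet (hf : Antitone f) (t : ℕ) :
    nthLargest (betaSet f s) t = if t < s then betaNum f s t else 0 := by
  rw [nthLargest, sort_betaSet hf, List.reverse_reverse, List.getD_eq_getElem?_getD]
  split_ifs with ht
  · simp [ht]
  · have : (List.range s)[t]? = none := by simpa using not_lt.1 ht
    simp [this]

lemma card_filter_mem_betaSet (hf : Antitone f) {t : ℕ} (ht : t < s) :
    #{u ∈ range (betaNum f s t) | u ∈ betaSet f s} = s - 1 - t := by
  have hanti := betaNum_strictAntiOn (s := s) hf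
  have : {u ∈ range (betaNum f s t) | u ∈ betaSet f s} = (Ioo t s).image (betaNum f s) := by
    ext u
    simp only [mem_filter, mem_range, mem_betaSet, mem_image, mem_Ioo]
    constructor
    · rintro ⟨hu, k, hk, rfl⟩
      exact ⟨k, ⟨(hanti.lt_iff_gt hk ht).1 hu, hk⟩, rfl⟩
    · rintro ⟨k, ⟨htk, hk⟩, rfl⟩
      exact ⟨hanti ht hk htk, k, hk, rfl⟩
  rw [this, card_image_of_injOn (hanti.injOn.mono fun k hk => (mem_Ioo.1 hk).2), Nat.card_Ioo]
  omega

lemma partOfSet_betaSet (hf : Antitone f) (hfs : ∀ i, s ≤ i → f i = 0) :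
    partOfSet (betaSet f s) = f := by
  funext t
  rw [partOfSet, nthLargest_betaSet hf]
  split_ifs with ht
  · have := card_filter_add_card_filter_not (s := range (betaNum f s t)) (· ∈ betaSet f s)
    rw [card_range, card_filter_mem_betaSet hf ht] at this
    have : betaNum f s t = f t + (s - 1 - t) := rfl
    omega
  · simp [hfs t (not_lt.1 ht)]

lemma betaSet_add_indicator (hf : Antitone f) {A : Finset ℕ}
    (hA : A ⊆ range s) :
    betaSet (f + (A : Set ℕ).indicator 1) s =
      (betaSet f s \ A.image (betaNum f s)) ∪ (A.image (betaNum f s)).image (· + 1) := by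
  have : betaNum (f + (A : Set ℕ).indicator 1) s = betaNum f s + (A : Set ℕ).indicator 1 := by
    funext k
    simp only [betaNum, Pi.add_apply]
    ring
  rw [betaSet, this, image_add_indicator hA (betaNum_injOn hf)]
  rfl

end BetaSet

section Nodes

variable {f : ℕ → ℕ} {s : ℕ}

lemma betaNum_add_one_mem_betaSet_iff (hf : Antitone f) {i : ℕ} (hi : i < s) :
    betaNum f s i + 1 ∈ betaSet f s ↔ 0 < i ∧ f (i - 1) = f i := by
  have hanti := betaNum_strictAntiOn (s := s) hf
  rw [mem_betaSet]
  constructor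
  · rintro ⟨k, hk, hbk⟩
    have hki : k < i := (hanti.lt_iff_gt hi hk).1 (by omega)
    have := hanti.antitoneOn (show k ∈ Set.Iio s from hk) (show i - 1 ∈ Set.Iio s by simp; omega)
      (by omega)
    have := hf (Nat.sub_le i 1)
    simp only [betaNum] at *
    omega
  · rintro ⟨hi0, hfi⟩
    exact ⟨i - 1, by omega, by simp only [betaNum]; omega⟩

lemma isAddable_iff_of_lt (hf : Antitone f) {i j : ℕ} (hi : i < s) :
    IsAddable f i j ↔ j = f i ∧ betaNum f s i + 1 ∉ betaSet f s := by
  rw [betaNum_add_one_mem_betaSet_iff hf hi, IsAddable]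
  have := hf (Nat.sub_le i 1)
  omega

lemma IsAddable.eq_of_le (hfs : ∀ i, s ≤ i → f i = 0) {i j : ℕ} (h : IsAddable f i j)
    (hi : s ≤ i) : i = s ∧ j = 0 := by
  have := hfs i hi
  obtain ⟨hj, hi0 | hlt⟩ := h
  · omega
  · have := hfs (i - 1)
    omega

lemma pResidue_eq_of_lt (p : ℕ) {i : ℕ} (j : ℕ) (hi : i < s) :
    pResidue p i j = ((j + (s - 1 - i) + 1 : ℕ) : ZMod p) - s := by
  rw [pResidue, Nat.sub_sub]
  push_cast [Nat.cast_sub (show 1 + i ≤ s by omega)]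
  ring

def movableRows (f : ℕ → ℕ) (s p ℓ : ℕ) : Finset ℕ :=
  {i ∈ range s | betaNum f s i % p = ℓ - 1 ∧ betaNum f s i + 1 ∉ betaSet f s}

lemma movableRows_subset_range (f : ℕ → ℕ) (s p ℓ : ℕ) : movableRows f s p ℓ ⊆ range s :=
  filter_subset _ _

lemma isAddable_and_pResidue_iff (hf : Antitone f) (hfs : ∀ i, s ≤ i → f i = 0) {p ℓ : ℕ}
    (hl1 : 1 ≤ ℓ) (hlp : ℓ < p) {i j : ℕ} :
    IsAddable f i j ∧ pResidue p i j = ℓ - s ↔ i ∈ movableRows f s p ℓ ∧ j = f i := by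
  rw [movableRows, mem_filter, mem_range]
  rcases lt_or_ge i s with hi | hi
  · rw [isAddable_iff_of_lt hf hi, pResidue_eq_of_lt p j hi, sub_left_inj,
      natCast_eq_natCast_iff_mod_eq hlp, add_one_mod_eq_iff hl1 hlp]
    constructor
    · rintro ⟨⟨rfl, hmem⟩, hmod⟩
      exact ⟨⟨hi, hmod, hmem⟩, rfl⟩
    · rintro ⟨⟨-, hmod, hmem⟩, rfl⟩
      exact ⟨⟨rfl, hmem⟩, hmod⟩
  · refine iff_of_false ?_ (by omega)
    rintro ⟨h, hres⟩
    obtain ⟨rfl, rfl⟩ := h.eq_of_le hfs hi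
    rw [pResidue, Nat.cast_zero, sub_left_inj, eq_comm, ← Nat.cast_zero,
      natCast_eq_natCast_iff_mod_eq (by omega), Nat.mod_eq_of_lt hlp] at hres
    omega

lemma betaNum_sub_one_notMem_betaSet (hf : Antitone f) {i j : ℕ} (h : IsRemovable f i j) :
    betaNum f s i - 1 ∉ betaSet f s := by
  rw [mem_betaSet]
  rintro ⟨k, hk, hbk⟩
  obtain ⟨hfi, hnext⟩ := h
  simp only [betaNum] at hbk
  rcases le_or_gt k i with hki | hik
  · have := hf hki
    omega
  · have := hf (show i + 1 ≤ k from hik)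
    omega

lemma pResidue_ne_of_isRemovable (hf : Antitone f) (hfs : ∀ i, s ≤ i → f i = 0) {p ℓ : ℕ}
    (hlp : ℓ < p) (hcol : ∀ x ∈ betaSet f s, x % p = ℓ → x - 1 ∈ betaSet f s) {i j : ℕ}
    (h : IsRemovable f i j) : pResidue p i j ≠ ℓ - s := by
  intro hres
  have hi : i < s := by
    by_contra hi
    have := hfs i (not_lt.1 hi)
    have := h.1
    omega
  rw [pResidue_eq_of_lt p j hi, sub_left_inj, natCast_eq_natCast_iff_mod_eq hlp] at hres
  have hb : betaNum f s i = j + (s - 1 - i) + 1 := by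
    simp only [betaNum, h.1]
    omega
  exact betaNum_sub_one_notMem_betaSet hf h (hcol _ (mem_betaSet.2 ⟨i, hi, rfl⟩) (hb ▸ hres))

end Nodes

section Runners

variable {p ℓ : ℕ} {B : Finset ℕ}

lemma sub_one_mem_of_mod_eq (hl1 : 1 ≤ ℓ) (hlp : ℓ < p)
    (hcol : ∀ a : ℕ, a * p + ℓ ∈ B → a * p + (ℓ - 1) ∈ B) {x : ℕ} (hx : x ∈ B) (hxp : x % p = ℓ) :
    x - 1 ∈ B := by
  obtain ⟨a, rfl⟩ := (exists_eq_mul_add_iff hlp).2 hxp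
  rw [show a * p + ℓ - 1 = a * p + (ℓ - 1) by omega]
  exact hcol a hx

lemma eq_swap_runners (hl1 : 1 ≤ ℓ) (hlp : ℓ < p) {B' : Finset ℕ}
    (hcol : ∀ a : ℕ, a * p + ℓ ∈ B → a * p + (ℓ - 1) ∈ B)
    (hB' : ∀ x : ℕ, x ∈ B' ↔
      ((x ∈ B ∧ x % p ≠ ℓ - 1 ∧ x % p ≠ ℓ) ∨
       (∃ a, x = a * p + ℓ ∧ a * p + (ℓ - 1) ∈ B) ∨
       (∃ a, x = a * p + (ℓ - 1) ∧ a * p + ℓ ∈ B))) :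
    B' = (B \ {x ∈ B | x % p = ℓ - 1 ∧ x + 1 ∉ B}) ∪
      {x ∈ B | x % p = ℓ - 1 ∧ x + 1 ∉ B}.image (· + 1) := by
  have hright : ∀ x, (∃ a, x = a * p + ℓ ∧ a * p + (ℓ - 1) ∈ B) ↔ x % p = ℓ ∧ x - 1 ∈ B := by
    intro x
    rw [← exists_eq_mul_add_iff hlp]
    constructor
    · rintro ⟨a, rfl, h⟩
      exact ⟨⟨a, rfl⟩, by rwa [show a * p + ℓ - 1 = a * p + (ℓ - 1) by omega]⟩
    · rintro ⟨⟨a, rfl⟩, h⟩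
      exact ⟨a, rfl, by rwa [show a * p + ℓ - 1 = a * p + (ℓ - 1) by omega] at h⟩
  have hleft : ∀ x, (∃ a, x = a * p + (ℓ - 1) ∧ a * p + ℓ ∈ B) ↔ x % p = ℓ - 1 ∧ x + 1 ∈ B := by
    intro x
    rw [← exists_eq_mul_add_iff (by omega : ℓ - 1 < p)]
    constructor
    · rintro ⟨a, rfl, h⟩
      exact ⟨⟨a, rfl⟩, by rwa [show a * p + (ℓ - 1) + 1 = a * p + ℓ by omega]⟩
    · rintro ⟨⟨a, rfl⟩, h⟩
      exact ⟨a, rfl, by rwa [show a * p + (ℓ - 1) + 1 = a * p + ℓ by omega] at h⟩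
  ext x
  rw [hB', hright, hleft]
  simp only [mem_union, mem_sdiff, mem_filter, mem_image]
  have hcolx := sub_one_mem_of_mod_eq hl1 hlp hcol (x := x)
  have hcolx1 := sub_one_mem_of_mod_eq hl1 hlp hcol (x := x + 1)
  have hnext := add_one_mod_eq_iff (x := x) hl1 hlp
  have hprev := add_one_mod_eq_iff (x := x - 1) hl1 hlp
  grind

end Runners

section RunnerSwap

variable {f : ℕ → ℕ} {s p ℓ : ℕ}

lemma image_betaNum_movableRows :
    (movableRows f s p ℓ).image (betaNum f s) =
      {x ∈ betaSet f s | x % p = ℓ - 1 ∧ x + 1 ∉ betaSet f s} := by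
  rw [movableRows, betaSet, filter_image]

lemma isAddable_of_mem_movableRows (hf : Antitone f) (hfs : ∀ i, s ≤ i → f i = 0)
    (hl1 : 1 ≤ ℓ) (hlp : ℓ < p) {i : ℕ} (hi : i ∈ movableRows f s p ℓ) : IsAddable f i (f i) :=
  ((isAddable_and_pResidue_iff hf hfs hl1 hlp).2 ⟨hi, rfl⟩).1

lemma card_addable_pResidue (hf : Antitone f) (hfs : ∀ i, s ≤ i → f i = 0) (hl1 : 1 ≤ ℓ)
    (hlp : ℓ < p) :
    Nat.card {x : ℕ × ℕ | IsAddable f x.1 x.2 ∧ pResidue p x.1 x.2 = ℓ - s} =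
      #(movableRows f s p ℓ) := by
  have : {x : ℕ × ℕ | IsAddable f x.1 x.2 ∧ pResidue p x.1 x.2 = ℓ - s} =
      (movableRows f s p ℓ).image fun i => (i, f i) := by
    ext ⟨i, j⟩
    simp [isAddable_and_pResidue_iff hf hfs hl1 hlp, eq_comm]
  rw [this, Nat.card_coe_set_eq, Set.ncard_coe_finset,
    card_image_of_injective _ fun _ _ h => (Prod.ext_iff.1 h).1]

lemma card_movableRows (hf : Antitone f) (hl1 : 1 ≤ ℓ) (hlp : ℓ < p) :
    Nat.card {a : ℕ | a * p + (ℓ - 1) ∈ betaSet f s ∧ a * p + ℓ ∉ betaSet f s} =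
      #(movableRows f s p ℓ) := by
  have hinj := (betaNum_injOn hf).mono (coe_subset.2 (movableRows_subset_range f s p ℓ))
  rw [← card_image_of_injOn hinj, image_betaNum_movableRows,
    ← card_setOf_mul_add_mem (by omega : ℓ - 1 < p) fun x hx => (mem_filter.1 hx).2.1]
  congr
  ext a
  simp [show a * p + (ℓ - 1) + 1 = a * p + ℓ by omega, Nat.mod_eq_of_lt (by omega : ℓ - 1 < p)]

lemma partOfSet_eq_add_indicator_movableRows (hf : Antitone f) (hfs : ∀ i, s ≤ i → f i = 0)
    (hl1 : 1 ≤ ℓ) (hlp : ℓ < p)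
    (hcol : ∀ a : ℕ, a * p + ℓ ∈ betaSet f s → a * p + (ℓ - 1) ∈ betaSet f s) {B' : Finset ℕ}
    (hB' : ∀ x : ℕ, x ∈ B' ↔
      ((x ∈ betaSet f s ∧ x % p ≠ ℓ - 1 ∧ x % p ≠ ℓ) ∨
       (∃ a, x = a * p + ℓ ∧ a * p + (ℓ - 1) ∈ betaSet f s) ∨
       (∃ a, x = a * p + (ℓ - 1) ∧ a * p + ℓ ∈ betaSet f s))) :
    partOfSet B' = f + (movableRows f s p ℓ : Set ℕ).indicator 1 := by
  have hAs := movableRows_subset_range f s p ℓ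
  rw [eq_swap_runners hl1 hlp hcol hB', ← image_betaNum_movableRows,
    ← betaSet_add_indicator hf hAs]
  refine partOfSet_betaSet (antitone_add_indicator hf
    fun i hi => isAddable_of_mem_movableRows hf hfs hl1 hlp hi) fun i hi => ?_
  have : i ∉ movableRows f s p ℓ := fun h => (mem_range.1 (hAs h)).not_ge hi
  simp [hfs i hi, this]

end RunnerSwap

theorem runner_swap_general (p : ℕ) (n : ℕ) (f : ℕ → ℕ) (hf : IsPartitionOf n f)
    (s : ℕ) (B : Finset ℕ) (hB : IsBetaSet f s B)
    (ℓ : ℕ) (hl1 : 1 ≤ ℓ) (hlp : ℓ < p)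
    (hcol : ∀ a : ℕ, a * p + ℓ ∈ B → a * p + (ℓ - 1) ∈ B)
    (r : ℕ) (hr : r = Nat.card {a : ℕ | a * p + (ℓ - 1) ∈ B ∧ a * p + ℓ ∉ B})
    (B' : Finset ℕ)
    (hB' : ∀ x : ℕ, x ∈ B' ↔
      ((x ∈ B ∧ x % p ≠ ℓ - 1 ∧ x % p ≠ ℓ) ∨
       (∃ a, x = a * p + ℓ ∧ a * p + (ℓ - 1) ∈ B) ∨
       (∃ a, x = a * p + (ℓ - 1) ∧ a * p + ℓ ∈ B))) :
    (Nat.card {x : ℕ × ℕ |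
        IsAddable f x.1 x.2 ∧ pResidue p x.1 x.2 = (ℓ : ZMod p) - (s : ZMod p)} = r ∧
      ∀ i j, IsRemovable f i j → pResidue p i j ≠ (ℓ : ZMod p) - (s : ZMod p)) ∧
    (IsPartitionOf (n + r) (partOfSet B') ∧
      ∀ i j : ℕ, j < partOfSet B' i ↔
        (j < f i ∨ (IsAddable f i j ∧ pResidue p i j = (ℓ : ZMod p) - (s : ZMod p)))) := by
  obtain ⟨hfs, hB⟩ := hB
  change B = betaSet f s at hB
  subst hB hr
  have hanti : Antitone f := hf.1.1
  have hf0 : ∀ i, s ≤ i → f i = 0 := fun i hi => Nat.eq_zero_of_le_zero (hfs ▸ hanti hi)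
  rw [card_movableRows hanti hl1 hlp,
    partOfSet_eq_add_indicator_movableRows hanti hf0 hl1 hlp hcol hB']
  refine ⟨⟨card_addable_pResidue hanti hf0 hl1 hlp, fun i j h => ?_⟩, ?_, fun i j => ?_⟩
  · exact pResidue_ne_of_isRemovable hanti hf0 hlp
      (fun x hx => sub_one_mem_of_mod_eq hl1 hlp hcol hx) h
  · exact hf.add_indicator fun i hi => isAddable_of_mem_movableRows hanti hf0 hl1 hlp hi
  · rw [lt_add_indicator_iff, isAddable_and_pResidue_iff hanti hf0 hl1 hlp]
    rfl

/-- Swapping runners `ℓ-1` and `ℓ` of a β-set `B` of `λ`, when runner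
`ℓ-1` dominates runner `ℓ`, produces the partition obtained by adding all `r` addable
nodes of `p`-residue `(ℓ − s) mod p` to `[λ]`; moreover `[λ]` has exactly `r` addable
nodes of this residue and no removable ones. -/
theorem runner_swap (p : ℕ) (hp : p.Prime) (n : ℕ) (f : ℕ → ℕ) (hf : IsPartitionOf n f)
    (s : ℕ) (B : Finset ℕ) (hB : IsBetaSet f s B)
    (ℓ : ℕ) (hl1 : 1 ≤ ℓ) (hlp : ℓ < p)
    (hcol : ∀ a : ℕ, a * p + ℓ ∈ B → a * p + (ℓ - 1) ∈ B)
    (r : ℕ) (hr : r = Nat.card {a : ℕ | a * p + (ℓ - 1) ∈ B ∧ a * p + ℓ ∉ B})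
    (hr1 : 1 ≤ r)
    (B' : Finset ℕ)
    (hB' : ∀ x : ℕ, x ∈ B' ↔
      ((x ∈ B ∧ x % p ≠ ℓ - 1 ∧ x % p ≠ ℓ) ∨
       (∃ a, x = a * p + ℓ ∧ a * p + (ℓ - 1) ∈ B) ∨
       (∃ a, x = a * p + (ℓ - 1) ∧ a * p + ℓ ∈ B))) :
    (Nat.card {x : ℕ × ℕ |
        IsAddable f x.1 x.2 ∧ pResidue p x.1 x.2 = (ℓ : ZMod p) - (s : ZMod p)} = r ∧
      ∀ i j, IsRemovable f i j → pResidue p i j ≠ (ℓ : ZMod p) - (s : ZMod p)) ∧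
    (IsPartitionOf (n + r) (partOfSet B') ∧
      ∀ i j : ℕ, j < partOfSet B' i ↔
        (j < f i ∨ (IsAddable f i j ∧ pResidue p i j = (ℓ : ZMod p) - (s : ZMod p)))) :=
  runner_swap_general p n f hf s B hB ℓ hl1 hlp hcol r hr B' hB'
end

section
/- Let F be a field of odd characteristic p, let (α|β) be a pair of partitions with |α| + |β| = n, and let P be a Sylow p-subgroup of the Young subgroup S_α × S_β ≤ S_n. Then M(α|β) is isomorphic to a direct summand of the permutation module Ind_P^{S_n}(F); in particular, the signed Young permutation module M(α|β) is a direct summand of a permutation F[S_n]-module. -/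
set_option synthInstance.maxHeartbeats 2000000
set_option maxHeartbeats 4000000


/-- The index of the block (of consecutive integers) containing `x ∈ {0, 1, 2, …}`, for
the list `L` of block sizes. -/
def blockOf (L : List ℕ) (x : ℕ) : ℕ :=
  ((List.range (L.length + 1)).filter (fun k => (L.take k).sum ≤ x)).length

/-- The Young subgroup of `Perm (Fin n)` determined by consecutive blocks of sizes `L`:
all permutations preserving each block. -/
def youngSubgroup (n : ℕ) (L : List ℕ) : Subgroup (Equiv.Perm (Fin n)) where
  carrier := {g | ∀ x : Fin n, blockOf L ((g x : Fin n) : ℕ) = blockOf L (x : ℕ)}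
  one_mem' := by intro x; rfl
  mul_mem' := by
    intro a b ha hb x
    have h1 := ha (b x)
    have h2 := hb x
    simpa [Equiv.Perm.mul_apply] using h1.trans h2
  inv_mem' := by
    intro a ha x
    have h := ha (a⁻¹ x)
    simpa using h.symm

/-- An isomorphism of `F`-linear representations: an `F`-linear equivalence intertwining
the two actions. -/
def RepIso (F : Type*) [Field F] {G V W : Type*} [Group G]
    [AddCommGroup V] [Module F V] [AddCommGroup W] [Module F W]
    (ρ : Representation F G V) (τ : Representation F G W) : Prop :=
  ∃ e : V ≃ₗ[F] W, ∀ (g : G) (v : V), e (ρ g v) = τ g (e v)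

/-- The carrier of the representation of `G` induced along `φ : H →* G` from `ρ`:
`F[G] ⊗_{F[H]} V`, realized as the space of `ρ`-equivariant functions `G → V`. -/
def inducedCarrier {F : Type*} [Field F] {H G V : Type*} [Group H] [Group G]
    [AddCommGroup V] [Module F V] (φ : H →* G) (ρ : Representation F H V) :
    Submodule F (G → V) where
  carrier := {f | ∀ (h : H) (g : G), f (φ h * g) = ρ h (f g)}
  add_mem' := by intro f f' hf hf' h g; simp [hf h g, hf' h g]
  zero_mem' := by intro h g; simp
  smul_mem' := by intro a f hf h g; simp [hf h g]

/-- The representation of `G` induced along `φ : H →* G` from `ρ`. -/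
def inducedRep {F : Type*} [Field F] {H G V : Type*} [Group H] [Group G]
    [AddCommGroup V] [Module F V] (φ : H →* G) (ρ : Representation F H V) :
    Representation F G (inducedCarrier φ ρ) where
  toFun σ :=
    { toFun := fun f => ⟨fun g => (f : G → V) (g * σ), fun h g => by
        simpa [mul_assoc] using f.2 h (g * σ)⟩
      map_add' := by intro f f'; rfl
      map_smul' := by intro a f; rfl }
  map_one' := by
    apply LinearMap.ext; intro f; apply Subtype.ext; funext g; simp
  map_mul' := by
    intro σ τ
    apply LinearMap.ext; intro f; apply Subtype.ext; funext g
    simp [Module.End.mul_apply, mul_assoc]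

/-- The one-dimensional representation attached to a character `χ : G →* Fˣ`. -/
def charRep (F : Type*) [Field F] {G : Type*} [Group G] (χ : G →* Fˣ) :
    Representation F G F :=
  (DistribMulAction.toModuleEnd F F).comp χ


/-- `L` is (the list of parts of) a partition: weakly decreasing positive entries. -/
def IsPartitionList (L : List ℕ) : Prop :=
  L.Pairwise (· ≥ ·) ∧ ∀ x ∈ L, 0 < x

/-- `χ` is the signed character of the Young subgroup `H = S_α × S_β` of `S_n`
(where `n₁ = |α|`): an element acts by the sign of the permutation it induces on the
last `n - n₁` points. -/
def IsSignedChar (F : Type*) [Field F] (n n₁ : ℕ)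
    (H : Subgroup (Equiv.Perm (Fin n))) (χ : H →* Fˣ) : Prop :=
  ∀ (g : H) (g' : Equiv.Perm (Fin n)),
    (∀ x : Fin n,
      (n₁ ≤ (x : ℕ) → g' x = (g : Equiv.Perm (Fin n)) x) ∧ ((x : ℕ) < n₁ → g' x = x)) →
    (χ g : F) = ((Equiv.Perm.sign g' : ℤ) : F)

/-- `ρ` is isomorphic to a direct summand of `τ`: there are equivariant linear maps
`i : V → W` and `π : W → V` with `π ∘ i = id`. -/
def IsDirectSummand (F : Type*) [Field F] {G V W : Type*} [Group G]
    [AddCommGroup V] [Module F V] [AddCommGroup W] [Module F W]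
    (ρ : Representation F G V) (τ : Representation F G W) : Prop :=
  ∃ (i : V →ₗ[F] W) (π : W →ₗ[F] V),
    (∀ g v, i (ρ g v) = τ g (i v)) ∧ (∀ g w, π (τ g w) = ρ g (π w)) ∧
    ∀ v, π (i v) = v

/-- The permutation representation on `X →₀ F` (the old `Representation.ofMulAction`). -/
noncomputable def ofMulActionFinsupp (k G H : Type*) [CommSemiring k] [Monoid G] [MulAction G H] :
    Representation k G (H →₀ k) where
  toFun g := Finsupp.lmapDomain k k (g • ·)
  map_one' := by ext x y; simp
  map_mul' x y := by ext z w; simp [mul_smul]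

/-!
Every element of `S_α × S_β` maps the last `|β|` points to themselves, so the signed character
`χ` equals the sign of a permutation and takes values `±1`. Since `p` is odd, `χ` is therefore
trivial on the `p`-group `Q`, and `Ind_H χ` embeds into `Ind_Q 1` (with `H = S_α × S_β`) by
restriction of functions. The relative trace `f ↦ [H:Q]⁻¹ ∑_{hQ ∈ H/Q} χ(h) f(h⁻¹ ·)` is an
equivariant retraction of this embedding, because `[H:Q]` is prime to `p`. Finally `Ind_Q 1` is
the permutation module on `S_n / Q`.
-/

theorem blockOf_eq_card_filter (L : List ℕ) (x : ℕ) :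
    blockOf L x = ((Finset.range (L.length + 1)).filter fun k => (L.take k).sum ≤ x).card :=
  rfl

theorem lt_blockOf_append_iff (α β : List ℕ) (x : ℕ) :
    α.length < blockOf (α ++ β) x ↔ α.sum ≤ x := by
  have hmono := List.monotone_sum_take (α ++ β)
  have hα : ((α ++ β).take α.length).sum = α.sum := by rw [List.take_left' rfl]
  rw [blockOf_eq_card_filter]
  constructor
  · intro hlt
    by_contra! hx
    have hsub : ((Finset.range ((α ++ β).length + 1)).filter
        fun k => ((α ++ β).take k).sum ≤ x) ⊆ Finset.range α.length := by
      intro k hk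
      simp only [Finset.mem_filter] at hk
      by_contra hk'
      have : ((α ++ β).take α.length).sum ≤ ((α ++ β).take k).sum :=
        hmono (not_lt.mp (Finset.mem_range.not.mp hk'))
      omega
    have := Finset.card_le_card hsub
    rw [Finset.card_range] at this
    omega
  · intro hx
    have hsub : Finset.range (α.length + 1) ⊆ (Finset.range ((α ++ β).length + 1)).filter
        fun k => ((α ++ β).take k).sum ≤ x := by
      intro k hk
      have hk : k ≤ α.length := Nat.lt_succ_iff.mp (Finset.mem_range.mp hk)
      have : ((α ++ β).take k).sum ≤ ((α ++ β).take α.length).sum := hmono hk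
      simp only [Finset.mem_filter, Finset.mem_range, List.length_append]
      omega
    have := Finset.card_le_card hsub
    rw [Finset.card_range] at this
    omega

theorem le_apply_iff_of_mem_youngSubgroup_append {n : ℕ} {α β : List ℕ}
    {g : Equiv.Perm (Fin n)} (hg : g ∈ youngSubgroup n (α ++ β)) (x : Fin n) :
    α.sum ≤ (g x : ℕ) ↔ α.sum ≤ (x : ℕ) := by
  rw [← lt_blockOf_append_iff α β, ← lt_blockOf_append_iff α β, hg x]

theorem IsSignedChar.sq_eq_one {F : Type*} [Field F] {n n₁ : ℕ}
    {H : Subgroup (Equiv.Perm (Fin n))} {χ : H →* Fˣ} (hχ : IsSignedChar F n n₁ H χ)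
    (hH : ∀ g ∈ H, ∀ x : Fin n, n₁ ≤ (g x : ℕ) ↔ n₁ ≤ (x : ℕ)) (h : H) : χ h ^ 2 = 1 := by
  let s : Equiv.Perm {x : Fin n // n₁ ≤ (x : ℕ)} :=
    (h : Equiv.Perm (Fin n)).subtypePerm (hH h h.2)
  have hg' : (χ h : F) = ((Equiv.Perm.sign (Equiv.Perm.ofSubtype s) : ℤ) : F) :=
    hχ h _ fun x => ⟨fun hx => Equiv.Perm.ofSubtype_apply_of_mem s hx,
      fun hx => Equiv.Perm.ofSubtype_apply_of_not_mem s (by omega)⟩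
  ext
  rw [Units.val_pow_eq_pow_val, hg', ← Int.cast_pow, ← Units.val_pow_eq_pow_val, Int.units_sq]
  simp

theorem IsPGroup.le_ker_of_sq_eq_one {p : ℕ} (hodd : Odd p) {G M : Type*} [Group G] [Monoid M]
    {Q : Subgroup G} (hQ : IsPGroup p Q) (χ : G →* M) (hχ : ∀ g, χ g ^ 2 = 1) : Q ≤ χ.ker := by
  intro g hg
  obtain ⟨k, hk⟩ := hQ ⟨g, hg⟩
  have hcop : Nat.Coprime (p ^ k) 2 := Nat.Coprime.symm (Nat.coprime_two_left.mpr hodd.pow)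
  have hpow : χ g ^ p ^ k = 1 := by
    rw [← map_pow, show g ^ p ^ k = 1 from congrArg Subtype.val hk, map_one]
  simpa [hcop] using pow_gcd_eq_one.mpr ⟨hpow, hχ g⟩

theorem ker_le_ker_charRep (F : Type*) [Field F] {G : Type*} [Group G] (χ : G →* Fˣ) :
    χ.ker ≤ (charRep F χ).ker := by
  intro g hg
  rw [MonoidHom.mem_ker] at hg ⊢
  simp only [charRep, MonoidHom.coe_comp, Function.comp_apply, hg, map_one]

@[simp]
theorem inducedRep_apply {F : Type*} [Field F] {H G V : Type*} [Group H] [Group G]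
    [AddCommGroup V] [Module F V] (φ : H →* G) (ρ : Representation F H V) (σ : G)
    (f : inducedCarrier φ ρ) (g : G) : (inducedRep φ ρ σ f : G → V) g = (f : G → V) (g * σ) :=
  rfl

section RelativeTrace

variable {F : Type*} [Field F] {G V : Type*} [Group G] [AddCommGroup V] [Module F V]
  {H P : Subgroup G} {ρ : Representation F H V}

theorem inducedCarrier_trivial_apply_mul
    (f : inducedCarrier P.subtype (Representation.trivial F P V)) {x : G} (hx : x ∈ P) (g : G) :
    (f : G → V) (x * g) = (f : G → V) g :=
  f.2 ⟨x, hx⟩ g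

variable (hP : P.subgroupOf H ≤ ρ.ker)

def inducedRestrict (hPH : P ≤ H) :
    inducedCarrier H.subtype ρ →ₗ[F] inducedCarrier P.subtype (Representation.trivial F P V) where
  toFun f := ⟨f, fun x g => by
    have hx : (⟨x, hPH x.2⟩ : H) ∈ ρ.ker := hP (Subgroup.mem_subgroupOf.mpr x.2)
    exact (f.2 ⟨x, hPH x.2⟩ g).trans (by rw [hx]; rfl)⟩
  map_add' _ _ := rfl
  map_smul' _ _ := rfl

@[simp]
theorem inducedRestrict_apply (hPH : P ≤ H) (f : inducedCarrier H.subtype ρ) :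
    (inducedRestrict hP hPH f : G → V) = f :=
  rfl

def cosetTerm (f : inducedCarrier P.subtype (Representation.trivial F P V)) (g : G)
    (c : H ⧸ P.subgroupOf H) : V :=
  Quotient.liftOn' c (fun h => ρ h ((f : G → V) ((h : G)⁻¹ * g))) <| by
    intro a b hab
    obtain ⟨q, hq, rfl⟩ : ∃ q ∈ P.subgroupOf H, b = a * q :=
      ⟨a⁻¹ * b, QuotientGroup.leftRel_apply.mp hab, by group⟩
    have hq' : (q : G)⁻¹ * ((a : G)⁻¹ * g) = ((a * q : H) : G)⁻¹ * g := by
      push_cast; group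
    rw [← hq', inducedCarrier_trivial_apply_mul f (inv_mem (Subgroup.mem_subgroupOf.mp hq)),
      map_mul, hP hq, mul_one]

theorem cosetTerm_mk (f : inducedCarrier P.subtype (Representation.trivial F P V)) (g : G)
    (h : H) : cosetTerm hP f g (h : H ⧸ P.subgroupOf H) = ρ h ((f : G → V) ((h : G)⁻¹ * g)) :=
  rfl

theorem cosetTerm_add (f f' : inducedCarrier P.subtype (Representation.trivial F P V)) (g : G)
    (c : H ⧸ P.subgroupOf H) :
    cosetTerm hP (f + f') g c = cosetTerm hP f g c + cosetTerm hP f' g c := by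
  induction c using QuotientGroup.induction_on
  simp only [cosetTerm_mk, Submodule.coe_add, Pi.add_apply, map_add]

theorem cosetTerm_smul (a : F) (f : inducedCarrier P.subtype (Representation.trivial F P V))
    (g : G) (c : H ⧸ P.subgroupOf H) : cosetTerm hP (a • f) g c = a • cosetTerm hP f g c := by
  induction c using QuotientGroup.induction_on
  simp only [cosetTerm_mk, Submodule.coe_smul, Pi.smul_apply, map_smul]

theorem cosetTerm_mul_left (f : inducedCarrier P.subtype (Representation.trivial F P V)) (h : H)
    (g : G) (c : H ⧸ P.subgroupOf H) :
    cosetTerm hP f (h * g) c = ρ h (cosetTerm hP f g (h⁻¹ • c)) := by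
  induction c using QuotientGroup.induction_on with | _ k => ?_
  rw [MulAction.Quotient.smul_mk, cosetTerm_mk, cosetTerm_mk, smul_eq_mul, ← Module.End.mul_apply,
    ← map_mul, mul_inv_cancel_left]
  push_cast
  simp only [mul_inv_rev, inv_inv, mul_assoc]

theorem cosetTerm_inducedRep (f : inducedCarrier P.subtype (Representation.trivial F P V))
    (σ g : G) (c : H ⧸ P.subgroupOf H) :
    cosetTerm hP (inducedRep P.subtype (Representation.trivial F P V) σ f) g c =
      cosetTerm hP f (g * σ) c := by
  induction c using QuotientGroup.induction_on
  rw [cosetTerm_mk, cosetTerm_mk, inducedRep_apply, mul_assoc]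

theorem cosetTerm_inducedRestrict (hPH : P ≤ H) (f : inducedCarrier H.subtype ρ) (g : G)
    (c : H ⧸ P.subgroupOf H) : cosetTerm hP (inducedRestrict hP hPH f) g c = (f : G → V) g := by
  induction c using QuotientGroup.induction_on with | _ k => ?_
  have hf : (f : G → V) ((k : G)⁻¹ * g) = ρ k⁻¹ ((f : G → V) g) := f.2 k⁻¹ g
  rw [cosetTerm_mk, inducedRestrict_apply, hf, ← Module.End.mul_apply, ← map_mul,
    mul_inv_cancel, map_one, Module.End.one_apply]

variable [Fintype (H ⧸ P.subgroupOf H)]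

/-- The relative trace from `P` to `H`, normalised by the index. -/
noncomputable def inducedAverage :
    inducedCarrier P.subtype (Representation.trivial F P V) →ₗ[F] inducedCarrier H.subtype ρ where
  toFun f := ⟨fun g => ((P.subgroupOf H).index : F)⁻¹ • ∑ c, cosetTerm hP f g c, fun h g => by
    simp only [Subgroup.subtype_apply, cosetTerm_mul_left, map_smul, map_sum]
    congr 1
    exact Fintype.sum_equiv (MulAction.toPerm h⁻¹) _ _ fun c => rfl⟩
  map_add' f f' := by
    ext g
    simp only [cosetTerm_add, Finset.sum_add_distrib, smul_add, Submodule.coe_add, Pi.add_apply]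
  map_smul' a f := by
    ext g
    simp only [cosetTerm_smul, ← Finset.smul_sum, smul_comm a, Submodule.coe_smul, Pi.smul_apply,
      RingHom.id_apply]

theorem inducedAverage_apply (f : inducedCarrier P.subtype (Representation.trivial F P V))
    (g : G) :
    (inducedAverage hP f : G → V) g = ((P.subgroupOf H).index : F)⁻¹ • ∑ c, cosetTerm hP f g c :=
  rfl

theorem inducedAverage_inducedRestrict (hPH : P ≤ H) (hidx : ((P.subgroupOf H).index : F) ≠ 0)
    (f : inducedCarrier H.subtype ρ) : inducedAverage hP (inducedRestrict hP hPH f) = f := by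
  ext g
  rw [inducedAverage_apply]
  simp only [cosetTerm_inducedRestrict, Finset.sum_const, Finset.card_univ]
  rw [← Nat.card_eq_fintype_card, ← Subgroup.index_eq_card, ← Nat.cast_smul_eq_nsmul F,
    inv_smul_smul₀ hidx]

end RelativeTrace

theorem isDirectSummand_inducedRep_trivial {F : Type*} [Field F] {G V : Type*} [Group G]
    [AddCommGroup V] [Module F V] {H P : Subgroup G} {ρ : Representation F H V}
    [Fintype (H ⧸ P.subgroupOf H)] (hPH : P ≤ H) (hP : P.subgroupOf H ≤ ρ.ker)
    (hidx : ((P.subgroupOf H).index : F) ≠ 0) :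
    IsDirectSummand F (inducedRep H.subtype ρ)
      (inducedRep P.subtype (Representation.trivial F P V)) := by
  refine ⟨inducedRestrict hP hPH, inducedAverage hP, fun σ f => rfl, fun σ f => ?_,
    inducedAverage_inducedRestrict hP hPH hidx⟩
  ext g
  simp only [inducedAverage_apply, inducedRep_apply, cosetTerm_inducedRep]

theorem IsDirectSummand.trans {F : Type*} [Field F] {G U V W : Type*} [Group G]
    [AddCommGroup U] [Module F U] [AddCommGroup V] [Module F V] [AddCommGroup W] [Module F W]
    {ρ : Representation F G U} {σ : Representation F G V} {τ : Representation F G W}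
    (h₁ : IsDirectSummand F ρ σ) (h₂ : IsDirectSummand F σ τ) : IsDirectSummand F ρ τ := by
  obtain ⟨i₁, π₁, hi₁, hπ₁, hπi₁⟩ := h₁
  obtain ⟨i₂, π₂, hi₂, hπ₂, hπi₂⟩ := h₂
  refine ⟨i₂ ∘ₗ i₁, π₁ ∘ₗ π₂, fun g v => ?_, fun g w => ?_, fun v => ?_⟩ <;>
    simp only [LinearMap.comp_apply, hi₁, hi₂, hπ₁, hπ₂, hπi₁, hπi₂]

theorem ofMulActionFinsupp_apply (k : Type*) {G X : Type*} [CommSemiring k] [Group G]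
    [MulAction G X] (σ : G) (u : X →₀ k) (x : X) :
    ofMulActionFinsupp k G X σ u x = u (σ⁻¹ • x) := by
  conv_lhs => rw [← smul_inv_smul σ x]
  exact Finsupp.mapDomain_apply (MulAction.injective σ) u _

section PermutationModule

variable {F : Type*} [Field F] {G : Type*} [Group G] {P : Subgroup G}

def cosetValue (f : inducedCarrier P.subtype (Representation.trivial F P F)) (c : G ⧸ P) : F :=
  Quotient.liftOn' c (fun g => (f : G → F) g⁻¹) fun a b hab => by
    obtain ⟨x, hx, rfl⟩ : ∃ x ∈ P, b = a * x :=
      ⟨a⁻¹ * b, QuotientGroup.leftRel_apply.mp hab, by group⟩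
    rw [mul_inv_rev, inducedCarrier_trivial_apply_mul f (inv_mem hx)]

variable (F P)

def finsuppToInducedTrivial :
    (G ⧸ P →₀ F) →ₗ[F] inducedCarrier P.subtype (Representation.trivial F P F) where
  toFun u := ⟨fun g => u ((g⁻¹ : G) : G ⧸ P), fun x g => by
    simp only [Subgroup.subtype_apply, mul_inv_rev, QuotientGroup.mk_mul_of_mem _ (inv_mem x.2)]
    rfl⟩
  map_add' _ _ := rfl
  map_smul' _ _ := rfl

theorem finsuppToInducedTrivial_apply (u : G ⧸ P →₀ F) (g : G) :
    (finsuppToInducedTrivial F P u : G → F) g = u ((g⁻¹ : G) : G ⧸ P) :=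
  rfl

variable [Finite (G ⧸ P)]

noncomputable def inducedTrivialToFinsupp :
    inducedCarrier P.subtype (Representation.trivial F P F) →ₗ[F] G ⧸ P →₀ F :=
  (Finsupp.linearEquivFunOnFinite F F (G ⧸ P)).symm.toLinearMap ∘ₗ
    { toFun := cosetValue
      map_add' _ _ := funext fun c => QuotientGroup.induction_on c fun _ => rfl
      map_smul' _ _ := funext fun c => QuotientGroup.induction_on c fun _ => rfl }

theorem inducedTrivialToFinsupp_apply_mk
    (f : inducedCarrier P.subtype (Representation.trivial F P F)) (g : G) :
    inducedTrivialToFinsupp F P f (g : G ⧸ P) = (f : G → F) g⁻¹ :=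
  rfl

theorem isDirectSummand_inducedRep_trivial_ofMulActionFinsupp :
    IsDirectSummand F (inducedRep P.subtype (Representation.trivial F P F))
      (ofMulActionFinsupp F G (G ⧸ P)) := by
  refine ⟨inducedTrivialToFinsupp F P, finsuppToInducedTrivial F P, fun σ f => ?_,
    fun σ u => ?_, fun f => ?_⟩
  · ext c
    induction c using QuotientGroup.induction_on
    rw [ofMulActionFinsupp_apply, MulAction.Quotient.smul_mk, inducedTrivialToFinsupp_apply_mk,
      inducedTrivialToFinsupp_apply_mk, inducedRep_apply, smul_eq_mul, mul_inv_rev, inv_inv]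
  · ext g
    rw [inducedRep_apply, finsuppToInducedTrivial_apply, finsuppToInducedTrivial_apply,
      ofMulActionFinsupp_apply, MulAction.Quotient.smul_mk, smul_eq_mul, mul_inv_rev]
  · ext g
    rw [finsuppToInducedTrivial_apply, inducedTrivialToFinsupp_apply_mk, inv_inv]

end PermutationModule

theorem signed_young_permutation_module_is_p_permutation_general (F : Type) [Field F]
    (p : ℕ) [CharP F p] (hp : p.Prime) (hodd : Odd p)
    (n : ℕ) (α β : List ℕ)
    (χ : youngSubgroup n (α ++ β) →* Fˣ)
    (hχ : IsSignedChar F n α.sum (youngSubgroup n (α ++ β)) χ)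
    (Q : Sylow p (youngSubgroup n (α ++ β)))
    (P : Subgroup (Equiv.Perm (Fin n)))
    (hP : P = Subgroup.map (youngSubgroup n (α ++ β)).subtype (Q : Subgroup (youngSubgroup n (α ++ β)))) :
    IsDirectSummand F
      (V := inducedCarrier (youngSubgroup n (α ++ β)).subtype (charRep F χ))
      (W := inducedCarrier P.subtype (Representation.trivial F (G := P) (V := F)))
      (inducedRep (youngSubgroup n (α ++ β)).subtype (charRep F χ))
      (inducedRep P.subtype (Representation.trivial F (G := P) (V := F))) ∧
    ∃ (X : Type) (_ : MulAction (Equiv.Perm (Fin n)) X),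
      IsDirectSummand F
        (V := inducedCarrier (youngSubgroup n (α ++ β)).subtype (charRep F χ))
        (W := X →₀ F)
        (inducedRep (youngSubgroup n (α ++ β)).subtype (charRep F χ))
        (ofMulActionFinsupp F (Equiv.Perm (Fin n)) X) := by
  have := Fact.mk hp
  have hQP : P.subgroupOf (youngSubgroup n (α ++ β)) = Q := by
    rw [hP, ← Subgroup.comap_subtype, Subgroup.comap_map_eq_self_of_injective Subtype.val_injective]
  have hχQ : P.subgroupOf (youngSubgroup n (α ++ β)) ≤ (charRep F χ).ker := hQP ▸
    (Q.isPGroup'.le_ker_of_sq_eq_one hodd χ (hχ.sq_eq_one fun _ hg =>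
      le_apply_iff_of_mem_youngSubgroup_append hg)).trans (ker_le_ker_charRep F χ)
  have hidx : ((P.subgroupOf (youngSubgroup n (α ++ β))).index : F) ≠ 0 := by
    rw [hQP, Ne, CharP.cast_eq_zero_iff F p]
    exact Q.not_dvd_index
  have hPH : P ≤ youngSubgroup n (α ++ β) := hP ▸ Subgroup.map_subtype_le _
  have := Fintype.ofFinite (youngSubgroup n (α ++ β) ⧸ P.subgroupOf (youngSubgroup n (α ++ β)))
  have hsummand := isDirectSummand_inducedRep_trivial hPH hχQ hidx
  exact ⟨hsummand, _, _, hsummand.trans (isDirectSummand_inducedRep_trivial_ofMulActionFinsupp F P)⟩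

/-- Let `F` be a field of odd characteristic `p`, `(α|β)` a pair of
partitions with `|α| + |β| = n`, and `P` a Sylow `p`-subgroup of the Young subgroup
`S_α × S_β ≤ S_n`.  Then the signed Young permutation module `M(α|β)` is isomorphic to a
direct summand of the permutation module `Ind_P^{S_n}(F)`; in particular it is a direct
summand of a permutation `F[S_n]`-module. -/
theorem signed_young_permutation_module_is_p_permutation (F : Type) [Field F]
    (p : ℕ) [CharP F p] (hp : p.Prime) (hodd : Odd p)
    (n : ℕ) (α β : List ℕ) (hα : IsPartitionList α) (hβ : IsPartitionList β)
    (hsum : α.sum + β.sum = n)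
    (χ : youngSubgroup n (α ++ β) →* Fˣ)
    (hχ : IsSignedChar F n α.sum (youngSubgroup n (α ++ β)) χ)
    (Q : Sylow p (youngSubgroup n (α ++ β)))
    (P : Subgroup (Equiv.Perm (Fin n)))
    (hP : P = Subgroup.map (youngSubgroup n (α ++ β)).subtype (Q : Subgroup (youngSubgroup n (α ++ β)))) :
    IsDirectSummand F
      (V := inducedCarrier (youngSubgroup n (α ++ β)).subtype (charRep F χ))
      (W := inducedCarrier P.subtype (Representation.trivial F (G := P) (V := F)))
      (inducedRep (youngSubgroup n (α ++ β)).subtype (charRep F χ))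
      (inducedRep P.subtype (Representation.trivial F (G := P) (V := F))) ∧
    ∃ (X : Type) (_ : MulAction (Equiv.Perm (Fin n)) X),
      IsDirectSummand F
        (V := inducedCarrier (youngSubgroup n (α ++ β)).subtype (charRep F χ))
        (W := X →₀ F)
        (inducedRep (youngSubgroup n (α ++ β)).subtype (charRep F χ))
        (ofMulActionFinsupp F (Equiv.Perm (Fin n)) X) :=
  signed_young_permutation_module_is_p_permutation_general F p hp hodd n α β χ hχ Q P hP
end
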